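/- arXiv:math/0401402 — 9 statements merged into one kernel-verified Lean document; each statement's English description precedes it below -/
import Mathlib

section
/- Let A be a Hermitian positive semidefinite matrix indexed by a finite set Γ partitioned into three pairwise disjoint nonempty subsets α, β, γ. Then det A · det A_{β,β} ≤ det A_{α∪β, α∪β} · det A_{β∪γ, β∪γ}. -/
open Matrix
open scoped ComplexOrder

namespace KotelAux

variable {n : Type*} [Fintype n] [DecidableEq n]

lemma det_nonneg' {A : Matrix n n ℂ} (hA : A.PosSemidef) : 0 ≤ A.det := by
  rw [hA.isHermitian.det_eq_prod_eigenvalues]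
  refine Finset.prod_nonneg fun i _ => ?_
  simpa using hA.eigenvalues_nonneg i

lemma posDef_of_det_ne_zero {A : Matrix n n ℂ} (hA : A.PosSemidef) (h : A.det ≠ 0) :
    A.PosDef := by
  refine posDef_iff_dotProduct_mulVec.mpr ⟨hA.isHermitian, fun x hx => ?_⟩
  refine lt_of_le_of_ne (hA.dotProduct_mulVec_nonneg x) fun h0 => hx ?_
  have hz : A *ᵥ x = 0 := (hA.dotProduct_mulVec_zero_iff x).mp h0.symm
  have hu : IsUnit A := (Matrix.isUnit_iff_isUnit_det A).2 h.isUnit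
  have hinj := Matrix.mulVec_injective_iff_isUnit.mpr hu
  have : A *ᵥ x = A *ᵥ 0 := by simpa using hz
  exact hinj this

lemma one_le_det_one_add {W : Matrix n n ℂ} (hW : W.PosSemidef) :
    1 ≤ ((1 : Matrix n n ℂ) + W).det := by
  have hH := hW.isHermitian
  set U : Matrix n n ℂ := (Matrix.IsHermitian.eigenvectorUnitary hH : Matrix n n ℂ) with hU
  have hUU : U * star U = 1 := Matrix.mem_unitaryGroup_iff.mp (Matrix.IsHermitian.eigenvectorUnitary hH).2
  set D : Matrix n n ℂ := Matrix.diagonal (RCLike.ofReal ∘ hH.eigenvalues) with hD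
  have hdecomp : (1 : Matrix n n ℂ) + W = U * (1 + D) * star U := by
    rw [mul_add, add_mul, mul_one, hUU]
    congr 1
    exact hH.spectral_theorem
  rw [hdecomp, Matrix.det_mul, Matrix.det_mul]
  have h3 : U.det * (star U).det = 1 := by rw [← Matrix.det_mul, hUU, Matrix.det_one]
  have h4 : U.det * (1 + D).det * (star U).det = (1 + D).det * (U.det * (star U).det) := by ring
  rw [h4, h3, mul_one, hD]
  rw [← Matrix.diagonal_one, Matrix.diagonal_add, Matrix.det_diagonal]
  calc (1 : ℂ) = ∏ _i : n, 1 := by simp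
    _ ≤ _ := by
        refine Finset.prod_le_prod (fun i _ => zero_le_one) fun i _ => ?_
        have := hW.eigenvalues_nonneg i
        simp only [Pi.add_apply, Pi.one_apply, Function.comp_apply]
        have h2 : (0:ℂ) ≤ (hH.eigenvalues i : ℂ) := by simpa using this
        exact le_add_of_nonneg_right h2

open scoped MatrixOrder in
lemma det_mono {X Y : Matrix n n ℂ} (hX : X.PosSemidef) (hYX : (Y - X).PosSemidef) :
    X.det ≤ Y.det := by
  have hY : Y.PosSemidef := by simpa using hX.add hYX
  by_cases hd : X.det = 0
  · rw [hd]; exact det_nonneg' hY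
  · set R := CFC.sqrt X with hRdef
    have hRH : R.IsHermitian := (CFC.sqrt_nonneg X).posSemidef.isHermitian
    have hRR : R * R = X := CFC.sqrt_mul_sqrt_self X hX.nonneg
    have hRdet : R.det ≠ 0 := by
      intro h0
      apply hd
      rw [← hRR, Matrix.det_mul, h0, zero_mul]
    have hRu : IsUnit R := (Matrix.isUnit_iff_isUnit_det R).2 hRdet.isUnit
    have hRinvH : (R⁻¹)ᴴ = R⁻¹ := by
      rw [Matrix.conjTranspose_nonsing_inv, hRH.eq]
    have hW : (R⁻¹ * (Y - X) * R⁻¹).PosSemidef := by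
      have := hYX.mul_mul_conjTranspose_same R⁻¹
      rwa [hRinvH] at this
    have hYdecomp : Y = R * (1 + R⁻¹ * (Y - X) * R⁻¹) * R := by
      rw [mul_add, add_mul, mul_one, hRR]
      have h1 : R * (R⁻¹ * (Y - X) * R⁻¹) * R = (R * R⁻¹) * (Y - X) * (R⁻¹ * R) := by
        noncomm_ring
      rw [h1, Matrix.mul_nonsing_inv _ hRdet.isUnit, Matrix.nonsing_inv_mul _ hRdet.isUnit,
        one_mul, mul_one]
      abel
    have hYdet : Y.det = X.det * (1 + R⁻¹ * (Y - X) * R⁻¹).det := by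
      conv_lhs => rw [hYdecomp]
      rw [Matrix.det_mul, Matrix.det_mul, ← hRR, Matrix.det_mul]; ring
    calc X.det = X.det * 1 := (mul_one _).symm
      _ ≤ X.det * (1 + R⁻¹ * (Y - X) * R⁻¹).det :=
          mul_le_mul_of_nonneg_left (one_le_det_one_add hW) (det_nonneg' hX)
      _ = Y.det := hYdet.symm

end KotelAux
set_option linter.unusedSectionVars false

namespace KotelAux2

variable {m l : Type*} [Fintype m] [DecidableEq m] [Fintype l] [DecidableEq l]

lemma hermitian_toBlocks₂₁ {M : Matrix (m ⊕ l) (m ⊕ l) ℂ} (hM : M.IsHermitian) :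
    M.toBlocks₂₁ = M.toBlocks₁₂ᴴ := by
  ext i j
  have := congrFun (congrFun hM.eq (Sum.inr i)) (Sum.inl j)
  simpa [Matrix.toBlocks₂₁, Matrix.toBlocks₁₂, Matrix.conjTranspose_apply] using this.symm

lemma blocks_decomp {M : Matrix (m ⊕ l) (m ⊕ l) ℂ} (hM : M.IsHermitian) :
    M = fromBlocks M.toBlocks₁₁ M.toBlocks₁₂ M.toBlocks₁₂ᴴ M.toBlocks₂₂ := by
  rw [← hermitian_toBlocks₂₁ hM, fromBlocks_toBlocks]

lemma toBlocks₁₁_posSemidef {M : Matrix (m ⊕ l) (m ⊕ l) ℂ} (hM : M.PosSemidef) :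
    M.toBlocks₁₁.PosSemidef :=
  hM.submatrix Sum.inl

lemma toBlocks₂₂_posSemidef {M : Matrix (m ⊕ l) (m ⊕ l) ℂ} (hM : M.PosSemidef) :
    M.toBlocks₂₂.PosSemidef :=
  hM.submatrix Sum.inr

/-- Schur complement of the (1,1) block is PSD. -/
lemma schur_posSemidef {M : Matrix (m ⊕ l) (m ⊕ l) ℂ} (hM : M.PosSemidef)
    (hP : M.toBlocks₁₁.PosDef) :
    (M.toBlocks₂₂ - M.toBlocks₁₂ᴴ * M.toBlocks₁₁⁻¹ * M.toBlocks₁₂).PosSemidef := by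
  have : Invertible M.toBlocks₁₁ := hP.isUnit.invertible
  exact (Matrix.PosDef.fromBlocks₁₁ _ _ hP).mp (by rw [← blocks_decomp hM.isHermitian]; exact hM)

lemma det_eq_schur {M : Matrix (m ⊕ l) (m ⊕ l) ℂ} (hM : M.IsHermitian)
    (hP : IsUnit M.toBlocks₁₁.det) :
    M.det = M.toBlocks₁₁.det
      * (M.toBlocks₂₂ - M.toBlocks₁₂ᴴ * M.toBlocks₁₁⁻¹ * M.toBlocks₁₂).det := by
  have : Invertible M.toBlocks₁₁ := M.toBlocks₁₁.invertibleOfIsUnitDet hP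
  conv_lhs => rw [blocks_decomp hM]
  rw [Matrix.det_fromBlocks₁₁, Matrix.invOf_eq_nonsing_inv]

/-- Fischer's inequality for a PSD block matrix. -/
lemma fischer {M : Matrix (m ⊕ l) (m ⊕ l) ℂ} (hM : M.PosSemidef) :
    M.det ≤ M.toBlocks₁₁.det * M.toBlocks₂₂.det := by
  have hP := toBlocks₁₁_posSemidef hM
  have hQ := toBlocks₂₂_posSemidef hM
  by_cases hd : M.toBlocks₁₁.det = 0
  · have hMdet : M.det = 0 := by
      obtain ⟨v, hv, hPv⟩ := (Matrix.exists_mulVec_eq_zero_iff).mpr hd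
      set u : m ⊕ l → ℂ := Sum.elim v 0 with hu
      have hune : u ≠ 0 := by
        intro h
        apply hv
        ext i
        exact congrFun h (Sum.inl i)
      have hMu : M *ᵥ u = 0 := by
        apply (hM.dotProduct_mulVec_zero_iff u).mp
        have h1 : M *ᵥ u = Sum.elim (M.toBlocks₁₁ *ᵥ v + M.toBlocks₁₂ *ᵥ 0)
            (M.toBlocks₂₁ *ᵥ v + M.toBlocks₂₂ *ᵥ 0) := by
          conv_lhs => rw [← fromBlocks_toBlocks M, hu]
          exact Matrix.fromBlocks_mulVec _ _ _ _ _
        have hstar : star u = Sum.elim (star v) 0 := by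
          ext (i | i) <;> simp [hu]
        rw [hstar, h1, sumElim_dotProduct_sumElim]
        simp [hPv]
      exact Matrix.exists_mulVec_eq_zero_iff.mp ⟨u, hune, hMu⟩
    rw [hMdet, hd, zero_mul]
  · have hPpd : M.toBlocks₁₁.PosDef := KotelAux.posDef_of_det_ne_zero hP hd
    have hdet := det_eq_schur hM.isHermitian (Ne.isUnit hd)
    have hS := schur_posSemidef hM hPpd
    have hdiff : (M.toBlocks₂₂ -
        (M.toBlocks₂₂ - M.toBlocks₁₂ᴴ * M.toBlocks₁₁⁻¹ * M.toBlocks₁₂)).PosSemidef := by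
      have hX : (M.toBlocks₁₂ᴴ * M.toBlocks₁₁⁻¹ * M.toBlocks₁₂).PosSemidef := by
        have := (hPpd.inv.posSemidef).conjTranspose_mul_mul_same M.toBlocks₁₂
        simpa using this
      simpa using hX
    have hmono := KotelAux.det_mono hS hdiff
    calc M.det = M.toBlocks₁₁.det *
          (M.toBlocks₂₂ - M.toBlocks₁₂ᴴ * M.toBlocks₁₁⁻¹ * M.toBlocks₁₂).det := hdet
      _ ≤ M.toBlocks₁₁.det * M.toBlocks₂₂.det :=
          mul_le_mul_of_nonneg_left hmono (KotelAux.det_nonneg' hP)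

end KotelAux2

namespace KotelAux3

lemma det_subtype_eq {Γ ι : Type*} [Fintype Γ] [DecidableEq Γ] [Fintype ι] [DecidableEq ι]
    (A : Matrix Γ Γ ℂ) (s : Finset Γ) (f : ι → Γ) (hinj : Function.Injective f)
    (hmem : ∀ i, f i ∈ s) (hsurj : ∀ x ∈ s, ∃ i, f i = x) :
    (A.submatrix (fun i : ↥s => (i : Γ)) (fun j : ↥s => (j : Γ))).det
      = (A.submatrix f f).det := by
  have hbij : Function.Bijective (fun i : ι => (⟨f i, hmem i⟩ : ↥s)) :=
    ⟨fun a b h => hinj (congrArg Subtype.val h),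
     fun x => (hsurj x x.2).imp fun i hi => Subtype.ext hi⟩
  rw [← Matrix.det_submatrix_equiv_self (Equiv.ofBijective _ hbij)]
  rfl

lemma det_full_eq {Γ ι : Type*} [Fintype Γ] [DecidableEq Γ] [Fintype ι] [DecidableEq ι]
    (A : Matrix Γ Γ ℂ) (f : ι → Γ) (hbij : Function.Bijective f) :
    A.det = (A.submatrix f f).det :=
  (Matrix.det_submatrix_equiv_self (Equiv.ofBijective f hbij) A).symm

lemma schur_restrict {b a c a' : Type*} [Fintype b] [DecidableEq b] [Fintype a] [Fintype c]
    [Fintype a'] (P : Matrix b b ℂ) (K : Matrix b (a ⊕ c) ℂ) (Q : Matrix (a ⊕ c) (a ⊕ c) ℂ)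
    (g : a' → a ⊕ c) :
    Q.submatrix g g - (K.submatrix id g)ᴴ * P⁻¹ * (K.submatrix id g)
      = (Q - Kᴴ * P⁻¹ * K).submatrix g g := by
  ext i j
  simp [Matrix.mul_apply, Matrix.sub_apply]

end KotelAux3

/-- For a Hermitian positive semidefinite matrix `A` indexed by a finite set `Γ`
partitioned into three pairwise disjoint nonempty subsets `α`, `β`, `γ`,
`det A * det A_{β,β} ≤ det A_{α∪β,α∪β} * det A_{β∪γ,β∪γ}`. -/
theorem det_three_block_inequality {Γ : Type*} [Fintype Γ] [DecidableEq Γ]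
    (A : Matrix Γ Γ ℂ) (hA : A.PosSemidef)
    (α β γ : Finset Γ)
    (hαβ : Disjoint α β) (hβγ : Disjoint β γ) (hαγ : Disjoint α γ)
    (hcover : α ∪ β ∪ γ = Finset.univ)
    (hα : α.Nonempty) (hβ : β.Nonempty) (hγ : γ.Nonempty) :
    A.det * (A.submatrix (fun i : ↥β => (i : Γ)) (fun j : ↥β => (j : Γ))).det ≤
      (A.submatrix (fun i : ↥(α ∪ β) => (i : Γ)) (fun j : ↥(α ∪ β) => (j : Γ))).det *
      (A.submatrix (fun i : ↥(β ∪ γ) => (i : Γ)) (fun j : ↥(β ∪ γ) => (j : Γ))).det := by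
  classical
  have hαβ' := Finset.disjoint_left.mp hαβ
  have hβγ' := Finset.disjoint_left.mp hβγ
  have hαγ' := Finset.disjoint_left.mp hαγ
  set E : ↥β ⊕ (↥α ⊕ ↥γ) → Γ :=
    Sum.elim Subtype.val (Sum.elim Subtype.val Subtype.val) with hE
  have hEbij : Function.Bijective E := by
    constructor
    · rintro (⟨x, hx⟩ | (⟨x, hx⟩ | ⟨x, hx⟩)) (⟨y, hy⟩ | (⟨y, hy⟩ | ⟨y, hy⟩)) hxy <;>
        simp only [hE, Sum.elim_inl, Sum.elim_inr] at hxy <;> subst hxy <;>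
        first
          | rfl
          | exact absurd hx (hαβ' hy)
          | exact absurd hy (hαβ' hx)
          | exact absurd hy (hβγ' hx)
          | exact absurd hx (hβγ' hy)
          | exact absurd hy (hαγ' hx)
          | exact absurd hx (hαγ' hy)
    · intro x
      have hx : x ∈ α ∪ β ∪ γ := hcover ▸ Finset.mem_univ x
      rcases Finset.mem_union.mp hx with h | h
      · rcases Finset.mem_union.mp h with h' | h'
        · exact ⟨Sum.inr (Sum.inl ⟨x, h'⟩), rfl⟩
        · exact ⟨Sum.inl ⟨x, h'⟩, rfl⟩
      · exact ⟨Sum.inr (Sum.inr ⟨x, h⟩), rfl⟩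
  set B : Matrix (↥β ⊕ (↥α ⊕ ↥γ)) (↥β ⊕ (↥α ⊕ ↥γ)) ℂ := A.submatrix E E with hBdef
  have hB : B.PosSemidef := hA.submatrix E
  set fαβ : ↥β ⊕ ↥α → Γ := Sum.elim Subtype.val Subtype.val with hfαβ
  set fβγ : ↥β ⊕ ↥γ → Γ := Sum.elim Subtype.val Subtype.val with hfβγ
  set Bαβ : Matrix (↥β ⊕ ↥α) (↥β ⊕ ↥α) ℂ := A.submatrix fαβ fαβ with hBαβdef
  set Bβγ : Matrix (↥β ⊕ ↥γ) (↥β ⊕ ↥γ) ℂ := A.submatrix fβγ fβγ with hBβγdef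
  have hBαβ : Bαβ.PosSemidef := hA.submatrix fαβ
  have hBβγ : Bβγ.PosSemidef := hA.submatrix fβγ
  set P : Matrix (↥β) (↥β) ℂ := B.toBlocks₁₁ with hPdef
  have goal_eq₁ : A.submatrix (fun i : ↥β => (i : Γ)) (fun j : ↥β => (j : Γ)) = P := rfl
  have goal_eq₂ : (A.submatrix (fun i : ↥(α ∪ β) => (i : Γ)) (fun j : ↥(α ∪ β) => (j : Γ))).det
      = Bαβ.det := by
    refine KotelAux3.det_subtype_eq A (α ∪ β) fαβ ?_ ?_ ?_
    · rintro (⟨x, hx⟩ | ⟨x, hx⟩) (⟨y, hy⟩ | ⟨y, hy⟩) hxy <;>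
        simp only [hfαβ, Sum.elim_inl, Sum.elim_inr] at hxy <;> subst hxy <;>
        first
          | rfl
          | exact absurd hx (hαβ' hy)
          | exact absurd hy (hαβ' hx)
    · rintro (b | a)
      · exact Finset.mem_union_right _ b.2
      · exact Finset.mem_union_left _ a.2
    · intro x hx
      rcases Finset.mem_union.mp hx with h | h
      · exact ⟨Sum.inr ⟨x, h⟩, rfl⟩
      · exact ⟨Sum.inl ⟨x, h⟩, rfl⟩
  have goal_eq₃ : (A.submatrix (fun i : ↥(β ∪ γ) => (i : Γ)) (fun j : ↥(β ∪ γ) => (j : Γ))).det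
      = Bβγ.det := by
    refine KotelAux3.det_subtype_eq A (β ∪ γ) fβγ ?_ ?_ ?_
    · rintro (⟨x, hx⟩ | ⟨x, hx⟩) (⟨y, hy⟩ | ⟨y, hy⟩) hxy <;>
        simp only [hfβγ, Sum.elim_inl, Sum.elim_inr] at hxy <;> subst hxy <;>
        first
          | rfl
          | exact absurd hy (hβγ' hx)
          | exact absurd hx (hβγ' hy)
    · rintro (b | c)
      · exact Finset.mem_union_left _ b.2
      · exact Finset.mem_union_right _ c.2
    · intro x hx
      rcases Finset.mem_union.mp hx with h | h
      · exact ⟨Sum.inl ⟨x, h⟩, rfl⟩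
      · exact ⟨Sum.inr ⟨x, h⟩, rfl⟩
  rw [goal_eq₁, goal_eq₂, goal_eq₃, KotelAux3.det_full_eq A E hEbij]
  -- now the goal is `B.det * P.det ≤ Bαβ.det * Bβγ.det`
  by_cases hd : P.det = 0
  · rw [show (A.submatrix E E).det = B.det from rfl, hd, mul_zero]
    exact mul_nonneg (KotelAux.det_nonneg' hBαβ) (KotelAux.det_nonneg' hBβγ)
  · have hPpsd : P.PosSemidef := KotelAux2.toBlocks₁₁_posSemidef hB
    have hPpd : P.PosDef := KotelAux.posDef_of_det_ne_zero hPpsd hd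
    have hPpos : (0 : ℂ) < P.det := hPpd.det_pos
    set S : Matrix (↥α ⊕ ↥γ) (↥α ⊕ ↥γ) ℂ :=
      B.toBlocks₂₂ - B.toBlocks₁₂ᴴ * P⁻¹ * B.toBlocks₁₂ with hSdef
    have hS : S.PosSemidef := KotelAux2.schur_posSemidef hB hPpd
    have hdetB : B.det = P.det * S.det := KotelAux2.det_eq_schur hB.isHermitian (Ne.isUnit hd)
    -- Schur complement of Bαβ
    have hαβ₁₁ : Bαβ.toBlocks₁₁ = P := rfl
    have hαβ₁₂ : Bαβ.toBlocks₁₂ = B.toBlocks₁₂.submatrix id Sum.inl := rfl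
    have hαβ₂₂ : Bαβ.toBlocks₂₂ = B.toBlocks₂₂.submatrix Sum.inl Sum.inl := rfl
    have hdetαβ : Bαβ.det = P.det * S.toBlocks₁₁.det := by
      have h0 := KotelAux2.det_eq_schur hBαβ.isHermitian
        (by rw [hαβ₁₁]; exact Ne.isUnit hd)
      rw [h0, hαβ₁₁, hαβ₁₂, hαβ₂₂, KotelAux3.schur_restrict]
      rfl
    have hβγ₁₁ : Bβγ.toBlocks₁₁ = P := rfl
    have hβγ₁₂ : Bβγ.toBlocks₁₂ = B.toBlocks₁₂.submatrix id Sum.inr := rfl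
    have hβγ₂₂ : Bβγ.toBlocks₂₂ = B.toBlocks₂₂.submatrix Sum.inr Sum.inr := rfl
    have hdetβγ : Bβγ.det = P.det * S.toBlocks₂₂.det := by
      have h0 := KotelAux2.det_eq_schur hBβγ.isHermitian
        (by rw [hβγ₁₁]; exact Ne.isUnit hd)
      rw [h0, hβγ₁₁, hβγ₁₂, hβγ₂₂, KotelAux3.schur_restrict]
      rfl
    have hfischer := KotelAux2.fischer hS
    calc (A.submatrix E E).det * P.det = (P.det * P.det) * S.det := by
          rw [show (A.submatrix E E).det = B.det from rfl, hdetB]; ring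
      _ ≤ (P.det * P.det) * (S.toBlocks₁₁.det * S.toBlocks₂₂.det) :=
          mul_le_mul_of_nonneg_left hfischer (mul_nonneg hPpos.le hPpos.le)
      _ = Bαβ.det * Bβγ.det := by rw [hdetαβ, hdetβγ]; ring
end

section
/- Let A be a Hermitian positive semidefinite n×n complex matrix. Then det A ≤ ∏_{i=1}^n A_{ii}, the product of the diagonal entries (Hadamard's inequality for positive semidefinite matrices). -/
open Matrix
open scoped ComplexOrder

/-- Hadamard's inequality for positive semidefinite matrices:
`det A ≤ ∏ i, A i i`. -/
theorem hadamard_inequality {n : ℕ} (A : Matrix (Fin n) (Fin n) ℂ)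
    (hA : A.PosSemidef) :
    A.det ≤ ∏ i, A i i := by
  rcases Nat.eq_zero_or_pos n with hn | hn
  · subst hn; simp [Matrix.det_fin_zero]
  have hdiag : ∀ i, 0 ≤ A i i := fun i => by
    have := hA.diag_nonneg (i := i)
    exact this
  by_cases hzero : ∃ i, A i i = 0
  · obtain ⟨i, hi⟩ := hzero
    have hprod : ∏ j, A j j = 0 := Finset.prod_eq_zero (Finset.mem_univ i) hi
    rw [hprod]
    open scoped MatrixOrder in set B := CFC.sqrt A with hBdef
    open scoped MatrixOrder in have hBB : B * B = A := CFC.sqrt_mul_sqrt_self A hA.nonneg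
    open scoped MatrixOrder in have hBh : B.IsHermitian := (CFC.sqrt_nonneg A).posSemidef.1
    have hAB : ∀ p q, A p q = ∑ k, B p k * B k q := fun p q => by
      rw [← hBB]; simp [Matrix.mul_apply]
    have hsum : ∑ k, Complex.normSq (B k i) = 0 := by
      have h1 : A i i = ∑ k, (Complex.normSq (B k i) : ℂ) := by
        rw [hAB i i]
        refine Finset.sum_congr rfl fun k _ => ?_
        have : B i k = star (B k i) := by
          conv_lhs => rw [← hBh.eq]
          rfl
        rw [this]
        simp [Complex.normSq_eq_conj_mul_self, Complex.star_def]
      have := hi.symm.trans h1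
      have := congrArg Complex.re this.symm
      push_cast at this
      simpa using this
    have hBcol : ∀ k, B k i = 0 := by
      intro k
      have h0 : Complex.normSq (B k i) = 0 :=
        (Finset.sum_eq_zero_iff_of_nonneg (fun j _ => Complex.normSq_nonneg _)).mp hsum k
          (Finset.mem_univ k)
      exact Complex.normSq_eq_zero.mp h0
    have hcol : ∀ k, A k i = 0 := fun k => by
      rw [hAB k i]
      simp [hBcol]
    rw [Matrix.det_eq_zero_of_column_eq_zero i hcol]
  · push_neg at hzero
    set r : Fin n → ℝ := fun i => (A i i).re with hr
    have hre : ∀ i, A i i = (r i : ℂ) := fun i => by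
      have h := hdiag i
      rw [Complex.nonneg_iff] at h
      exact Complex.ext rfl (by simpa using h.2.symm)
    have hrpos : ∀ i, 0 < r i := fun i => by
      rcases lt_or_eq_of_le (Complex.nonneg_iff.mp (hdiag i)).1 with h | h
      · exact h
      · exact absurd (by rw [hre i]; exact Complex.ofReal_eq_zero.mpr h.symm) (hzero i)
    set c : Fin n → ℝ := fun i => (Real.sqrt (r i))⁻¹ with hc
    set D : Matrix (Fin n) (Fin n) ℂ := Matrix.diagonal (fun i => (c i : ℂ)) with hD
    have hDh : Dᴴ = D := by
      rw [hD, Matrix.diagonal_conjTranspose]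
      funext i
      simp [Pi.star_def, Complex.star_def, Complex.conj_ofReal]
    set B : Matrix (Fin n) (Fin n) ℂ := D * A * D with hB
    have hBpsd : B.PosSemidef := by
      have := hA.mul_mul_conjTranspose_same D
      rwa [hDh] at this
    have hcc : ∀ i, (c i : ℂ) * (r i : ℂ) * (c i : ℂ) = 1 := fun i => by
      have h1 : c i * r i * c i = 1 := by
        rw [hc]
        have hs : Real.sqrt (r i) * Real.sqrt (r i) = r i :=
          Real.mul_self_sqrt (hrpos i).le
        have hsne : Real.sqrt (r i) ≠ 0 := Real.sqrt_ne_zero'.mpr (hrpos i)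
        field_simp
        exact (Real.sq_sqrt (hrpos i).le).symm
      calc (c i : ℂ) * (r i : ℂ) * (c i : ℂ) = ((c i * r i * c i : ℝ) : ℂ) := by
            push_cast; ring
        _ = 1 := by rw [h1]; norm_num
    have hBdiag : ∀ i, B i i = 1 := fun i => by
      have : B i i = (c i : ℂ) * A i i * (c i : ℂ) := by
        rw [hB, hD, Matrix.mul_diagonal, Matrix.diagonal_mul]
      rw [this, hre i]; exact hcc i
    set μ : Fin n → ℝ := hBpsd.1.eigenvalues with hμ
    have hμnonneg : ∀ i, 0 ≤ μ i := hBpsd.eigenvalues_nonneg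
    -- trace of B equals sum of eigenvalues
    have htrace : ∑ i, (μ i : ℂ) = (n : ℂ) := by
      have h1 : B.trace = ∑ i, (μ i : ℂ) := by
        conv_lhs => rw [hBpsd.1.spectral_theorem]
        rw [Unitary.conjStarAlgAut_apply]
        rw [Matrix.trace_mul_cycle]
        rw [show star (hBpsd.1.eigenvectorUnitary : Matrix (Fin n) (Fin n) ℂ) *
            (hBpsd.1.eigenvectorUnitary : Matrix (Fin n) (Fin n) ℂ) = 1 from
          Matrix.UnitaryGroup.star_mul_self _]
        rw [one_mul, Matrix.trace_diagonal]
        rfl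
      have h2 : B.trace = (n : ℂ) := by
        rw [Matrix.trace]
        simp only [Matrix.diag_apply]
        rw [Finset.sum_congr rfl fun i _ => hBdiag i]
        simp
      rw [← h1, h2]
    have hsumμ : ∑ i, μ i = (n : ℝ) := by
      have := htrace
      rw [show ∑ i, (μ i : ℂ) = ((∑ i, μ i : ℝ) : ℂ) by push_cast; ring] at this
      exact_mod_cast this
    -- AM-GM
    have hprodμ : ∏ i, μ i ≤ 1 := by
      have hw : ∀ i ∈ Finset.univ, (0:ℝ) ≤ (fun _ : Fin n => (1:ℝ)) i := fun _ _ => zero_le_one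
      have hw' : (0:ℝ) < ∑ _i : Fin n, (1:ℝ) := by
        simp only [Finset.sum_const, Finset.card_univ, Fintype.card_fin, nsmul_eq_mul, mul_one]
        exact_mod_cast hn
      have hz : ∀ i ∈ Finset.univ, (0:ℝ) ≤ μ i := fun i _ => hμnonneg i
      have h := Real.geom_mean_le_arith_mean Finset.univ (fun _ => (1:ℝ)) μ hw hw' hz
      simp only [Real.rpow_one, one_mul, Finset.sum_const, Finset.card_univ, Fintype.card_fin,
        nsmul_eq_mul, mul_one] at h
      rw [hsumμ, div_self (by exact_mod_cast hn.ne' : (n:ℝ) ≠ 0)] at h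
      have hprodnn : (0:ℝ) ≤ ∏ i, μ i := Finset.prod_nonneg fun i _ => hμnonneg i
      have h2 := Real.rpow_le_rpow (Real.rpow_nonneg hprodnn _) h (Nat.cast_nonneg n)
      rw [Real.one_rpow, ← Real.rpow_mul hprodnn,
        inv_mul_cancel₀ (by exact_mod_cast hn.ne' : (n:ℝ) ≠ 0), Real.rpow_one] at h2
      exact h2
    -- determinant relations
    have hdetB : B.det = ((∏ i, μ i : ℝ) : ℂ) := by
      rw [hBpsd.1.det_eq_prod_eigenvalues]
      push_cast
      rfl
    have hdetD2 : D.det * D.det = (((∏ i, r i)⁻¹ : ℝ) : ℂ) := by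
      rw [hD, Matrix.det_diagonal, ← Finset.prod_mul_distrib]
      have : ∀ i, (c i : ℂ) * (c i : ℂ) = (((r i)⁻¹ : ℝ) : ℂ) := fun i => by
        have hreal : c i * c i = (r i)⁻¹ := by
          rw [hc, ← mul_inv, Real.mul_self_sqrt (hrpos i).le]
        rw [← hreal]
        push_cast
        ring
      rw [Finset.prod_congr rfl fun i _ => this i]
      push_cast
      rw [Finset.prod_inv_distrib]
    have hdetBA : B.det = A.det * (((∏ i, r i)⁻¹ : ℝ) : ℂ) := by
      rw [hB, Matrix.det_mul, Matrix.det_mul, ← hdetD2]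
      ring
    have hprodrne : (∏ i, r i) ≠ 0 := (Finset.prod_pos fun i _ => hrpos i).ne'
    have hdetA : A.det = ((((∏ i, μ i) * ∏ i, r i : ℝ)) : ℂ) := by
      have hkey : A.det * (((∏ i, r i)⁻¹ : ℝ) : ℂ) = ((∏ i, μ i : ℝ) : ℂ) :=
        hdetBA.symm.trans hdetB
      have hinv : (((∏ i, r i)⁻¹ : ℝ) : ℂ) * ((∏ i, r i : ℝ) : ℂ) = 1 := by
        rw [← Complex.ofReal_mul, inv_mul_cancel₀ hprodrne, Complex.ofReal_one]
      calc A.det = A.det * ((((∏ i, r i)⁻¹ : ℝ) : ℂ) * ((∏ i, r i : ℝ) : ℂ)) := by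
            rw [hinv, mul_one]
        _ = (A.det * (((∏ i, r i)⁻¹ : ℝ) : ℂ)) * ((∏ i, r i : ℝ) : ℂ) := by ring
        _ = ((∏ i, μ i : ℝ) : ℂ) * ((∏ i, r i : ℝ) : ℂ) := by rw [hkey]
        _ = _ := by push_cast; ring
    rw [hdetA, Finset.prod_congr rfl fun i _ => hre i,
      show ∏ i, ((r i : ℝ) : ℂ) = ((∏ i, r i : ℝ) : ℂ) by push_cast; rfl]
    rw [Complex.real_le_real]
    exact mul_le_of_le_one_left (Finset.prod_nonneg fun i _ => (hrpos i).le) hprodμ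
end

section
/- Let T be a bounded positive operator on a complex Hilbert space with bounded inverse T^{-1}, and let P be an orthogonal projection. Then P T^{-1} P ≥ P (P T P)^{-1} P in the operator ordering, where (PTP)^{-1} denotes the inverse of the restriction of PTP to the range of P (extended by zero on the orthogonal complement). -/
open ContinuousLinearMap RCLike
open scoped InnerProductSpace

/-- Projection-inversion inequality: if `T` is a bounded positive operator with bounded
inverse `T'` and `P` an orthogonal projection, then `P T⁻¹ P ≥ P (P T P)⁻¹ P`, where
`R = P (P T P)⁻¹ P` is the inverse of `P T P` on the range of `P`, extended by zero. -/
theorem projection_inversion {H : Type*} [NormedAddCommGroup H] [InnerProductSpace ℂ H]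
    [CompleteSpace H]
    (T T' : H →L[ℂ] H) (hT : T.IsPositive)
    (hTT' : T * T' = 1) (hT'T : T' * T = 1)
    (P : H →L[ℂ] H) (hP : IsIdempotentElem P) (hPsa : IsSelfAdjoint P)
    (R : H →L[ℂ] H) (hRP : P * R * P = R)
    (hR1 : (P * T * P) * R = P) (hR2 : R * (P * T * P) = P) :
    (P * T' * P - R).IsPositive := by
  have hPP : P * P = P := hP
  have hTsa : IsSelfAdjoint T := hT.isSelfAdjoint
  -- algebraic facts
  have hPR : P * R = R := by
    conv_lhs => rw [← hRP]
    rw [← mul_assoc, ← mul_assoc, hPP, hRP]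
  have hRPe : R * P = R := by
    conv_lhs => rw [← hRP]
    rw [mul_assoc, hPP, hRP]
  -- T' is self-adjoint
  have hT'sa : IsSelfAdjoint T' := by
    have h1 : star T' * T = 1 := by
      have := congrArg star hTT'
      rwa [star_mul, star_one, hTsa.star_eq] at this
    calc star T' = star T' * (T * T') := by rw [hTT', mul_one]
      _ = (star T' * T) * T' := (mul_assoc _ _ _).symm
      _ = T' := by rw [h1, one_mul]
  -- R is self-adjoint
  have hRsa : IsSelfAdjoint R := by
    have h2 : (P * T * P) * star R = P := by
      have := congrArg star hR2
      rwa [star_mul, star_mul, star_mul, hTsa.star_eq, hPsa.star_eq] at this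
    have hRP' : R = P * star R := by
      calc R = R * P := hRPe.symm
        _ = R * ((P * T * P) * star R) := by rw [h2]
        _ = (R * (P * T * P)) * star R := (mul_assoc _ _ _).symm
        _ = P * star R := by rw [hR2]
    have h5 := congrArg star hRP'
    rw [star_mul, star_star, hPsa.star_eq, hRPe] at h5
    exact h5
  have hPT'Psa : IsSelfAdjoint (P * T' * P) := by
    show star _ = _
    rw [star_mul, star_mul, hPsa.star_eq, hT'sa.star_eq, mul_assoc]
  constructor
  · exact ContinuousLinearMap.isSelfAdjoint_iff_isSymmetric.mp (hPT'Psa.sub hRsa)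
  · intro x
    rw [reApplyInnerSelf]
    -- pointwise facts
    set u := P x with hu
    set v := R x with hv
    set w := T' u with hw
    have hPv : P v = v := by rw [hv, ← ContinuousLinearMap.mul_apply, hPR]
    have hTw : T w = u := by rw [hw, ← ContinuousLinearMap.mul_apply, hTT', ContinuousLinearMap.one_apply]
    have hPTPv : P (T (P v)) = u := by
      have := congrArg (fun A : H →L[ℂ] H => A x) hR1
      simpa [ContinuousLinearMap.mul_apply] using this
    -- P self-adjoint: move P across inner products
    have hPinner : ∀ a b : H, (⟪P a, b⟫_ℂ) = ⟪a, P b⟫_ℂ := by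
      intro a b
      conv_lhs => rw [← hPsa.adjoint_eq]
      exact adjoint_inner_left P b a
    have hTinner : ∀ a b : H, (⟪T a, b⟫_ℂ) = ⟪a, T b⟫_ℂ := by
      intro a b
      conv_lhs => rw [← hTsa.adjoint_eq]
      exact adjoint_inner_left T b a
    -- key inner product identities
    have e1 : (⟪(P * T' * P - R) x, x⟫_ℂ) = ⟪w, u⟫_ℂ - ⟪v, u⟫_ℂ := by
      rw [sub_apply, inner_sub_left]
      congr 1
      · rw [ContinuousLinearMap.mul_apply, ContinuousLinearMap.mul_apply, hPinner, ← hu, ← hw]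
      · rw [← hv, ← hPv, hPinner, hPv, ← hu]
    have e2 : (⟪v, u⟫_ℂ) = ⟪v, T v⟫_ℂ := by
      rw [← hPTPv, ← hPinner, hPv]
    have e3 : (⟪w, u⟫_ℂ) = ⟪w, T w⟫_ℂ := by rw [hTw]
    -- positivity of T at w - v
    have hpos := hT.2 (w - v)
    rw [reApplyInnerSelf] at hpos
    have expand : (⟪T (w - v), w - v⟫_ℂ)
        = ⟪T w, w⟫_ℂ - ⟪T w, v⟫_ℂ - ⟪T v, w⟫_ℂ + ⟪T v, v⟫_ℂ := by
      simp only [map_sub, inner_sub_left, inner_sub_right]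
      ring
    have c1 : (⟪T w, v⟫_ℂ) = ⟪u, v⟫_ℂ := by rw [hTw]
    have c2 : (⟪T v, w⟫_ℂ) = ⟪v, u⟫_ℂ := by rw [hTinner, hTw]
    rw [expand, c1, c2] at hpos
    have r1 : re (⟪u, v⟫_ℂ) = re (⟪v, u⟫_ℂ) := inner_re_symm _ _
    have r2 : re (⟪T w, w⟫_ℂ) = re (⟪w, T w⟫_ℂ) := inner_re_symm _ _
    have r3 : re (⟪T v, v⟫_ℂ) = re (⟪v, T v⟫_ℂ) := inner_re_symm _ _
    rw [e1, map_sub, e2, e3]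
    simp only [map_add, map_sub] at hpos
    linarith [hpos, r1, r2, r3, congrArg re e2]
end

section
/- Let K be a self-adjoint operator on a Hilbert space with 0 ≤ K ≤ I and ‖K‖ < 1, and let P ≤ Q be orthogonal projections (i.e., PQ = QP = P). Define J_{[P]} := (PKP)(I − PKP)^{-1} restricted to the range of P, and similarly J_{[Q]}. Then J_{[P]} ≤ P J_{[Q]} P in the operator ordering on the range of P. -/
open ContinuousLinearMap RCLike
open scoped ComplexInnerProductSpace

section Aux

variable {H : Type*} [NormedAddCommGroup H] [InnerProductSpace ℂ H] [CompleteSpace H]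

private lemma sa_inner {T : H →L[ℂ] H} (hT : IsSelfAdjoint T) (x y : H) :
    ⟪T x, y⟫ = ⟪x, T y⟫ := by
  rw [← hT.adjoint_eq, ContinuousLinearMap.adjoint_inner_left, hT.adjoint_eq]

private lemma proj_apply_norm_le (P : H →L[ℂ] H) (hP : IsIdempotentElem P)
    (hPsa : IsSelfAdjoint P) (x : H) : ‖P x‖ ≤ ‖x‖ := by
  have h1 : ⟪P x, P x⟫ = ⟪x, P x⟫ := by
    conv_lhs => rw [sa_inner hPsa, ← ContinuousLinearMap.mul_apply, hP]
  have h2 : ‖P x‖ ^ 2 = re ⟪x, P x⟫ := by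
    rw [← h1, inner_self_eq_norm_sq]
  have h3 : re ⟪x, P x⟫ ≤ ‖x‖ * ‖P x‖ := by
    calc re ⟪x, P x⟫ ≤ |re ⟪x, P x⟫| := le_abs_self _
      _ ≤ ‖(⟪x, P x⟫ : ℂ)‖ := abs_re_le_norm _
      _ ≤ ‖x‖ * ‖P x‖ := norm_inner_le_norm _ _
  nlinarith [norm_nonneg (P x), norm_nonneg x]

end Aux

/-- Monotonicity of the local interaction operators: for a self-adjoint operator `K`
with `0 ≤ K ≤ I` and `‖K‖ < 1`, and orthogonal projections `P ≤ Q`,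
`J_{[P]} ≤ P J_{[Q]} P`, where `J_{[R]} := (R K R)(I - R K R)⁻¹`. -/
theorem local_interaction_monotone {H : Type*} [NormedAddCommGroup H]
    [InnerProductSpace ℂ H] [CompleteSpace H]
    (K : H →L[ℂ] H) (hK : K.IsPositive) (hKI : (1 - K).IsPositive) (hKnorm : ‖K‖ < 1)
    (P Q : H →L[ℂ] H)
    (hP : IsIdempotentElem P) (hPsa : IsSelfAdjoint P)
    (hQ : IsIdempotentElem Q) (hQsa : IsSelfAdjoint Q)
    (hPQ : P * Q = P) (hQP : Q * P = P) :
    (P * ((Q * K * Q) * Ring.inverse (1 - Q * K * Q)) * P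
      - (P * K * P) * Ring.inverse (1 - P * K * P)).IsPositive := by
  set B := Q * K * Q with hBdef
  set A := P * K * P with hAdef
  -- norm bounds
  have hPn : ∀ x, ‖P x‖ ≤ ‖x‖ := proj_apply_norm_le P hP hPsa
  have hQn : ∀ x, ‖Q x‖ ≤ ‖x‖ := proj_apply_norm_le Q hQ hQsa
  have hPnorm : ‖P‖ ≤ 1 := P.opNorm_le_bound zero_le_one (fun x => by simpa using hPn x)
  have hQnorm : ‖Q‖ ≤ 1 := Q.opNorm_le_bound zero_le_one (fun x => by simpa using hQn x)
  have hAnorm : ‖A‖ < 1 := by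
    have h1 : ‖A‖ ≤ ‖P * K‖ * ‖P‖ := norm_mul_le _ _
    have h2 : ‖P * K‖ ≤ ‖P‖ * ‖K‖ := norm_mul_le _ _
    nlinarith [norm_nonneg (P * K), norm_nonneg P, norm_nonneg K]
  have hBnorm : ‖B‖ < 1 := by
    have h1 : ‖B‖ ≤ ‖Q * K‖ * ‖Q‖ := norm_mul_le _ _
    have h2 : ‖Q * K‖ ≤ ‖Q‖ * ‖K‖ := norm_mul_le _ _
    nlinarith [norm_nonneg (Q * K), norm_nonneg Q, norm_nonneg K]
  -- inverses
  have hCu : IsUnit (1 - B) := isUnit_one_sub_of_norm_lt_one hBnorm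
  have hA'u : IsUnit (1 - A) := isUnit_one_sub_of_norm_lt_one hAnorm
  set D := Ring.inverse (1 - B) with hDdef
  set S := Ring.inverse (1 - A) with hSdef
  have hCD : (1 - B) * D = 1 := Ring.mul_inverse_cancel _ hCu
  have hDC : D * (1 - B) = 1 := Ring.inverse_mul_cancel _ hCu
  have hA'S : (1 - A) * S = 1 := Ring.mul_inverse_cancel _ hA'u
  have hSA' : S * (1 - A) = 1 := Ring.inverse_mul_cancel _ hA'u
  have hBD : B * D = D - 1 := by rw [← hCD, sub_mul, one_mul]; abel
  have hDB : D * B = D - 1 := by rw [← hDC, mul_sub, mul_one]; abel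
  have hAS : A * S = S - 1 := by rw [← hA'S, sub_mul, one_mul]; abel
  have hSA : S * A = S - 1 := by rw [← hSA', mul_sub, mul_one]; abel
  -- algebraic relations with P
  have hPA : P * A = A := by rw [hAdef, ← mul_assoc, ← mul_assoc, hP]
  have hAP : A * P = A := by rw [hAdef, mul_assoc, hP]
  have hPBP : P * B * P = A := by
    rw [hBdef, hAdef]
    calc P * (Q * K * Q) * P = P * Q * K * (Q * P) := by noncomm_ring
      _ = P * K * P := by rw [hPQ, hQP]
  have hPA' : P * (1 - A) = (1 - A) * P := by
    rw [mul_sub, sub_mul, mul_one, one_mul, hPA, hAP]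
  have hPS : P * S = S * P := by
    calc P * S = S * (1 - A) * (P * S) := by rw [hSA', one_mul]
      _ = S * ((P * (1 - A)) * S) := by rw [hPA']; noncomm_ring
      _ = S * P * ((1 - A) * S) := by noncomm_ring
      _ = S * P := by rw [hA'S, mul_one]
  -- self-adjointness facts
  have hKsa : IsSelfAdjoint K := hK.isSelfAdjoint
  have hBsa : IsSelfAdjoint B := by
    rw [hBdef]
    simp [IsSelfAdjoint, star_mul, hQsa.star_eq, hKsa.star_eq, mul_assoc]
  have hAsa : IsSelfAdjoint A := by
    rw [hAdef]
    simp [IsSelfAdjoint, star_mul, hPsa.star_eq, hKsa.star_eq, mul_assoc]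
  have hCsa : IsSelfAdjoint (1 - B) := by
    show star (1 - B) = 1 - B
    rw [star_sub, star_one, hBsa.star_eq]
  have hA'sa : IsSelfAdjoint (1 - A) := by
    show star (1 - A) = 1 - A
    rw [star_sub, star_one, hAsa.star_eq]
  have hDsa : IsSelfAdjoint D := by
    have h1 : star D * (1 - B) = 1 := by
      have h := congrArg star hCD
      rwa [star_mul, hCsa.star_eq, star_one] at h
    show star D = D
    calc star D = star D * ((1 - B) * D) := by rw [hCD, mul_one]
      _ = star D * (1 - B) * D := by rw [mul_assoc]
      _ = D := by rw [h1, one_mul]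
  have hSsa : IsSelfAdjoint S := by
    have h1 : star S * (1 - A) = 1 := by
      have h := congrArg star hA'S
      rwa [star_mul, hA'sa.star_eq, star_one] at h
    show star S = S
    calc star S = star S * ((1 - A) * S) := by rw [hA'S, mul_one]
      _ = star S * (1 - A) * S := by rw [mul_assoc]
      _ = S := by rw [h1, one_mul]
  have hG1sa : IsSelfAdjoint (P * (B * D) * P) := by
    have hBDsa : IsSelfAdjoint (B * D) := by
      show star (B * D) = B * D
      rw [star_mul, hBsa.star_eq, hDsa.star_eq, hDB, hBD]
    show star (P * (B * D) * P) = P * (B * D) * P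
    rw [star_mul, star_mul, hPsa.star_eq, hBDsa.star_eq, ← mul_assoc]
  have hG2sa : IsSelfAdjoint (A * S) := by
    show star (A * S) = A * S
    rw [star_mul, hSsa.star_eq, hAsa.star_eq, hSA, hAS]
  -- positivity of 1 - B
  have hCpos : ∀ w : H, 0 ≤ re ⟪(1 - B) w, w⟫ := by
    intro w
    have h1 : re ⟪K (Q w), Q w⟫ ≤ ‖Q w‖ ^ 2 := by
      have h := hKI.2 (Q w)
      rw [reApplyInnerSelf_apply, ContinuousLinearMap.sub_apply, ContinuousLinearMap.one_apply,
        inner_sub_left, map_sub, inner_self_eq_norm_sq] at h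
      linarith
    have h2 : ‖Q w‖ ≤ ‖w‖ := hQn w
    have h3 : ⟪B w, w⟫ = ⟪K (Q w), Q w⟫ := by
      rw [hBdef, ContinuousLinearMap.mul_apply, ContinuousLinearMap.mul_apply, sa_inner hQsa]
    rw [ContinuousLinearMap.sub_apply, ContinuousLinearMap.one_apply, inner_sub_left, map_sub,
      inner_self_eq_norm_sq, h3]
    nlinarith [norm_nonneg (Q w), norm_nonneg w]
  constructor
  · exact ContinuousLinearMap.isSelfAdjoint_iff_isSymmetric.mp (hG1sa.sub hG2sa)
  · intro x
    set u := P x with hu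
    set a := D u with ha
    set b := S u with hb
    have fPu : P u = u := by
      rw [hu, ← ContinuousLinearMap.mul_apply, hP]
    have fPb : P b = b := by
      have h := congrArg (fun T : H →L[ℂ] H => T (P x)) hPS
      simp only [ContinuousLinearMap.mul_apply] at h
      have h2 : P (P x) = P x := by rw [← ContinuousLinearMap.mul_apply, hP]
      rw [h2] at h
      rw [hb, hu]
      exact h
    have fAb : A b = b - u := by
      rw [hb, ← ContinuousLinearMap.mul_apply, hAS, ContinuousLinearMap.sub_apply,
        ContinuousLinearMap.one_apply]
    have fCa : (1 - B) a = u := by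
      rw [ha, ← ContinuousLinearMap.mul_apply, hCD, ContinuousLinearMap.one_apply]
    have key1 : ⟪(P * (B * D) * P) x, x⟫ = ⟪a - u, u⟫ := by
      have h1 : (P * (B * D) * P) x = P (a - u) := by
        rw [ContinuousLinearMap.mul_apply, ContinuousLinearMap.mul_apply, ← hu, hBD,
          ContinuousLinearMap.sub_apply, ContinuousLinearMap.one_apply, ← ha]
      rw [h1, sa_inner hPsa, ← hu]
    have key2 : ⟪(A * S) x, x⟫ = ⟪b - u, u⟫ := by
      have hASP : A * S = A * S * P := by
        conv_lhs => rw [← hAP, mul_assoc, hPS, ← mul_assoc]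
      have h1 : (A * S) x = b - u := by
        rw [hASP, ContinuousLinearMap.mul_apply, ← hu, ContinuousLinearMap.mul_apply, ← hb, fAb]
      have h2 : P (b - u) = b - u := by rw [map_sub, fPb, fPu]
      rw [h1]
      calc ⟪b - u, x⟫ = ⟪P (b - u), x⟫ := by rw [h2]
        _ = ⟪b - u, P x⟫ := sa_inner hPsa _ _
        _ = ⟪b - u, u⟫ := by rw [← hu]
    have key5 : ⟪(1 - B) b, b⟫ = ⟪u, b⟫ := by
      have hPCP : P * (1 - B) * P = P - A := by
        rw [mul_sub, sub_mul, mul_one, hP, hPBP]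
      have h1 : P ((1 - B) b) = u := by
        have e1 : P ((1 - B) b) = (P * (1 - B) * P) b := by
          rw [ContinuousLinearMap.mul_apply, ContinuousLinearMap.mul_apply, fPb]
        rw [e1, hPCP, ContinuousLinearMap.sub_apply, fPb, fAb]
        abel
      calc ⟪(1 - B) b, b⟫ = ⟪(1 - B) b, P b⟫ := by rw [fPb]
        _ = ⟪P ((1 - B) b), b⟫ := by rw [sa_inner hPsa]
        _ = ⟪u, b⟫ := by rw [h1]
    have keyCb : ⟪(1 - B) b, a⟫ = ⟪b, u⟫ := by
      rw [sa_inner hCsa, fCa]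
    -- final computation
    rw [reApplyInnerSelf_apply, ContinuousLinearMap.sub_apply, inner_sub_left, map_sub,
      key1, key2]
    have expand : re ⟪(1 - B) (a - b), a - b⟫
        = re ⟪a - u, u⟫ - re ⟪b - u, u⟫ := by
      have e1 : (1 - B) (a - b) = u - (1 - B) b := by rw [map_sub, fCa]
      rw [e1, inner_sub_left, inner_sub_right, inner_sub_right, keyCb, key5]
      rw [inner_sub_left, inner_sub_left]
      simp only [map_sub]
      have r1 : re ⟪u, a⟫ = re ⟪a, u⟫ := inner_re_symm _ _
      have r2 : re ⟪b, u⟫ = re ⟪u, b⟫ := inner_re_symm _ _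
      ring_nf
      linarith [r1, r2]
    rw [← expand]
    exact hCpos (a - b)
end

section
/- Let K be a self-adjoint operator on a Hilbert space with 0 ≤ K ≤ I and ‖K‖ < 1, let J := K(I − K)^{-1}, and let P be an orthogonal projection. Then P J_{[P]} P ≤ P J P, where J_{[P]} := (PKP)(I − PKP)^{-1}. Equivalently, P(I − PKP)^{-1}P ≤ P(I − K)^{-1}P. -/
section Aux

variable {H : Type*} [NormedAddCommGroup H] [InnerProductSpace ℂ H] [CompleteSpace H]

open RCLike in
/-- Cauchy–Schwarz for the semi-inner ℂ product induced by a positive operator. -/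
private lemma cs_pos (T : H →L[ℂ] H) (hT : T.IsPositive) (x y : H) :
    (re (inner ℂ (T x) y : ℂ)) ^ 2
      ≤ re (inner ℂ (T x) x : ℂ) * re (inner ℂ (T y) y : ℂ) := by
  have hsymm : ∀ u v : H, (inner ℂ (T u) v : ℂ) = inner ℂ u (T v) := by
    intro u v
    have h := ContinuousLinearMap.adjoint_inner_left T v u
    rwa [hT.isSelfAdjoint.adjoint_eq] at h
  have hsym : re (inner ℂ (T y) x : ℂ) = re (inner ℂ (T x) y : ℂ) := by
    have h1 : (inner ℂ (T y) x : ℂ) = starRingEnd ℂ (inner ℂ (T x) y : ℂ) := by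
      rw [hsymm y x]
      exact (inner_conj_symm y (T x)).symm
    rw [h1, conj_re]
  have key : ∀ t : ℝ, 0 ≤ re (inner ℂ (T y) y : ℂ) * (t * t)
      + (2 * re (inner ℂ (T x) y : ℂ)) * t + re (inner ℂ (T x) x : ℂ) := by
    intro t
    have h0 := hT.2 (x + (t : ℂ) • y)
    rw [ContinuousLinearMap.reApplyInnerSelf_apply] at h0
    have hx : (inner ℂ (T (x + (t : ℂ) • y)) (x + (t : ℂ) • y) : ℂ)
        = inner ℂ (T x) x + (t : ℂ) * inner ℂ (T x) y + (t : ℂ) * inner ℂ (T y) x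
          + ((t * t : ℝ) : ℂ) * inner ℂ (T y) y := by
      simp only [map_add, map_smul, inner_add_left, inner_add_right, inner_smul_left,
        inner_smul_right, Complex.ofReal_mul, Complex.conj_ofReal]
      ring
    rw [hx] at h0
    simp only [map_add, RCLike.re_to_complex, Complex.re_ofReal_mul] at h0
    simp only [RCLike.re_to_complex] at hsym ⊢
    rw [hsym] at h0
    linarith [h0]
  have hd := discrim_le_zero key
  rw [discrim] at hd
  nlinarith [hd]

end Aux

open RCLike in
/-- For a self-adjoint operator `K` with `0 ≤ K ≤ I` and `‖K‖ < 1`, `J := K(I-K)⁻¹`,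
and an orthogonal projection `P`, one has `P J_{[P]} P ≤ P J P`, where
`J_{[P]} := (P K P)(I - P K P)⁻¹`; equivalently `P(I - PKP)⁻¹P ≤ P(I - K)⁻¹P`. -/
theorem local_global_interaction_le {H : Type*} [NormedAddCommGroup H]
    [InnerProductSpace ℂ H] [CompleteSpace H]
    (K : H →L[ℂ] H) (hK : K.IsPositive) (hKI : (1 - K).IsPositive) (hKnorm : ‖K‖ < 1)
    (P : H →L[ℂ] H) (hP : IsIdempotentElem P) (hPsa : IsSelfAdjoint P) :
    (P * (K * Ring.inverse (1 - K)) * P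
      - P * ((P * K * P) * Ring.inverse (1 - P * K * P)) * P).IsPositive ∧
    (P * Ring.inverse (1 - K) * P
      - P * Ring.inverse (1 - P * K * P) * P).IsPositive := by
  have hPsym : ∀ u v : H, (inner ℂ (P u) v : ℂ) = inner ℂ u (P v) := fun u v =>
    hPsa.isSymmetric u v
  have hPapp : ∀ v : H, P (P v) = P v := by
    intro v
    have := congrArg (fun T : H →L[ℂ] H => T v) hP
    simpa [ContinuousLinearMap.mul_apply] using this
  -- `P` is a contraction
  have hPnorm : ∀ x : H, ‖P x‖ ≤ ‖x‖ := by
    intro x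
    rcases eq_or_lt_of_le (norm_nonneg (P x)) with h0 | h0
    · rw [← h0]; positivity
    have h1 : (‖P x‖ : ℝ) ^ 2 = re (inner ℂ (P x) (P x) : ℂ) :=
      (inner_self_eq_norm_sq (P x)).symm
    have h2 : (inner ℂ (P x) (P x) : ℂ) = inner ℂ x (P x) := by
      rw [hPsym x (P x), hPapp]
    have h3 : re (inner ℂ x (P x) : ℂ) ≤ ‖x‖ * ‖P x‖ :=
      (re_le_norm _).trans (norm_inner_le_norm x (P x))
    nlinarith [h1, h2 ▸ h1, h3, h0]
  -- norm bound for the compressed operator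
  have hBnorm : ‖P * K * P‖ < 1 := by
    have hb : ‖P * K * P‖ ≤ ‖K‖ := by
      apply ContinuousLinearMap.opNorm_le_bound _ (norm_nonneg K)
      intro x
      have hx : (P * K * P) x = P (K (P x)) := by
        simp [ContinuousLinearMap.mul_apply]
      rw [hx]
      calc ‖P (K (P x))‖ ≤ ‖K (P x)‖ := hPnorm _
        _ ≤ ‖K‖ * ‖P x‖ := K.le_opNorm _
        _ ≤ ‖K‖ * ‖x‖ := mul_le_mul_of_nonneg_left (hPnorm x) (norm_nonneg K)
    exact lt_of_le_of_lt hb hKnorm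
  set Ai := Ring.inverse (1 - K) with hAidef
  set Bi := Ring.inverse (1 - P * K * P) with hBidef
  -- unit facts
  have hA1 : (1 - K) * Ai = 1 := by
    rw [hAidef, NormedRing.inverse_one_sub K hKnorm, ← Units.val_oneSub K hKnorm,
      Units.mul_inv]
  have hB1 : (1 - P * K * P) * Bi = 1 := by
    rw [hBidef, NormedRing.inverse_one_sub _ hBnorm, ← Units.val_oneSub _ hBnorm,
      Units.mul_inv]
  -- commutation of `Bi` with `P`
  have hcommB : P * Bi = Bi * P := by
    have hPB : P * (P * K * P) = (P * K * P) * P := by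
      have e1 : P * (P * K * P) = P * K * P := by
        rw [show P * (P * K * P) = P * P * K * P by noncomm_ring, hP]
      have e2 : (P * K * P) * P = P * K * P := by
        rw [show (P * K * P) * P = P * K * (P * P) by noncomm_ring, hP]
      rw [e1, e2]
    have hc : Commute P ((Units.oneSub (P * K * P) hBnorm : (H →L[ℂ] H)ˣ) : H →L[ℂ] H) := by
      show P * _ = _ * P
      rw [Units.val_oneSub]
      simp only [mul_sub, sub_mul, mul_one, one_mul, hPB]
    have hc' := hc.units_inv_right
    rw [hBidef, NormedRing.inverse_one_sub _ hBnorm]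
    exact hc'.eq
  -- self-adjointness
  have hAi_sa : IsSelfAdjoint Ai := by
    show star Ai = Ai
    rw [hAidef, ← Ring.inverse_star, hKI.isSelfAdjoint.star_eq]
  have hBsub_sa : IsSelfAdjoint (1 - P * K * P) := by
    show star (1 - P * K * P) = 1 - P * K * P
    simp [star_sub, star_mul, hPsa.star_eq, hK.isSelfAdjoint.star_eq, mul_assoc]
  have hBi_sa : IsSelfAdjoint Bi := by
    show star Bi = Bi
    rw [hBidef, ← Ring.inverse_star, hBsub_sa.star_eq]
  -- applied versions
  have appA : ∀ v : H, (1 - K) (Ai v) = v := by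
    intro v
    have h := congrArg (fun T : H →L[ℂ] H => T v) hA1
    simpa [ContinuousLinearMap.mul_apply] using h
  have appB : ∀ v : H, (1 - P * K * P) (Bi v) = v := by
    intro v
    have h := congrArg (fun T : H →L[ℂ] H => T v) hB1
    simpa [ContinuousLinearMap.mul_apply] using h
  -- the key positivity statement
  have hmain : (P * Ai * P - P * Bi * P).IsPositive := by
    constructor
    · have h1 : IsSelfAdjoint (P * Ai * P) := by
        show star (P * Ai * P) = P * Ai * P
        simp [star_mul, hPsa.star_eq, hAi_sa.star_eq, mul_assoc]
      have h2 : IsSelfAdjoint (P * Bi * P) := by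
        show star (P * Bi * P) = P * Bi * P
        simp [star_mul, hPsa.star_eq, hBi_sa.star_eq, mul_assoc]
      exact (h1.sub h2).isSymmetric
    · intro x
      rw [ContinuousLinearMap.reApplyInnerSelf_apply]
      set u := P x with hu_def
      have hu : P u = u := hPapp x
      set z := Bi u with hz_def
      have hz : P z = z := by
        have h := congrArg (fun T : H →L[ℂ] H => T u) hcommB
        simp only [ContinuousLinearMap.mul_apply] at h
        rw [hz_def, h, hu]
      set t := re (inner ℂ z u : ℂ) with ht_def
      set s := re (inner ℂ (Ai u) u : ℂ) with hs_def
      -- goal reduces to `0 ≤ s - t`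
      have hgoal : re (inner ℂ ((P * Ai * P - P * Bi * P) x) x : ℂ) = s - t := by
        have e1 : (P * Ai * P - P * Bi * P) x = P (Ai u) - P (Bi u) := by
          simp [ContinuousLinearMap.sub_apply, ContinuousLinearMap.mul_apply, hu_def]
        rw [e1, inner_sub_left, map_sub]
        have e2 : (inner ℂ (P (Ai u)) x : ℂ) = inner ℂ (Ai u) u := by
          rw [hPsym, ← hu_def]
        have e3 : (inner ℂ (P (Bi u)) x : ℂ) = inner ℂ (Bi u) u := by
          rw [hPsym, ← hu_def]
        rw [e2, e3, ← hz_def, ← ht_def, ← hs_def]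
      rw [hgoal]
      -- auxiliary identities
      have hAu : (1 - K) (Ai u) = u := appA u
      have hBu : (1 - P * K * P) z = u := by rw [hz_def]; exact appB u
      have hKz : (inner ℂ ((1 - P * K * P) z) z : ℂ) = inner ℂ ((1 - K) z) z := by
        have e1 : (1 - P * K * P) z = z - P (K (P z)) := by
          simp [ContinuousLinearMap.sub_apply, ContinuousLinearMap.mul_apply]
        have e2 : (1 - K) z = z - K z := by
          simp [ContinuousLinearMap.sub_apply]
        rw [e1, e2, inner_sub_left, inner_sub_left]
        congr 1
        rw [hPsym (K (P z)) z, hz]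
      have hteq : t = re (inner ℂ ((1 - K) z) z : ℂ) := by
        rw [ht_def, ← hBu, inner_re_symm, hKz]
      have ht_nonneg : 0 ≤ t := hteq ▸ hKI.re_inner_nonneg_left z
      have hseq : s = re (inner ℂ (Ai u) ((1 - K) (Ai u)) : ℂ) := by
        rw [hs_def, hAu]
      have hs_nonneg : 0 ≤ s := hseq ▸ hKI.re_inner_nonneg_right (Ai u)
      -- Cauchy–Schwarz
      have hcs := cs_pos (1 - K) hKI (Ai u) z
      rw [hAu] at hcs
      have h4 : re (inner ℂ u z : ℂ) = t := by rw [ht_def, inner_re_symm]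
      have h5 : re (inner ℂ u (Ai u) : ℂ) = s := by rw [hs_def, inner_re_symm]
      rw [h4, h5, ← hteq] at hcs
      -- now `hcs : t ^ 2 ≤ s * t`
      nlinarith [hcs, ht_nonneg, hs_nonneg]
  refine ⟨?_, hmain⟩
  have hKA : K * Ai = Ai - 1 := by
    calc K * Ai = Ai - (1 - K) * Ai := by noncomm_ring
      _ = Ai - 1 := by rw [hA1]
  have hKB : (P * K * P) * Bi = Bi - 1 := by
    calc (P * K * P) * Bi = Bi - (1 - P * K * P) * Bi := by noncomm_ring
      _ = Bi - 1 := by rw [hB1]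
  have heq : P * (K * Ai) * P - P * ((P * K * P) * Bi) * P
      = P * Ai * P - P * Bi * P := by
    rw [hKA, hKB]; noncomm_ring
  rw [heq]
  exact hmain
end

section
/- Let Γ be a finite set, A a Hermitian positive semidefinite matrix indexed by Γ, and for subsets ξ ⊆ Γ write D(ξ) := det A_{ξ,ξ} (with D(∅) = 1). Then for any fixed α ⊆ Γ, the function ξ ↦ D(α∪ξ)/D(ξ) (defined to be 0 when D(ξ) = 0) is decreasing in ξ on subsets ξ ⊆ Γ\α ordered by inclusion: if ξ ⊆ η ⊆ Γ\α then D(α∪η)/D(η) ≤ D(α∪ξ)/D(ξ). -/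
open Matrix
open scoped ComplexOrder


open Matrix Finset
open scoped ComplexOrder ComplexConjugate

noncomputable section
namespace PapangelouAux

variable {E : Type*} [NormedAddCommGroup E] [InnerProductSpace ℂ E]

/-- Gram matrix of a finite family of vectors. -/
def gram {ι : Type*} [Fintype ι] (v : ι → E) : Matrix ι ι ℂ :=
  Matrix.of fun i j => @inner ℂ _ _ (v i) (v j)

lemma gram_transform {ι : Type*} [Fintype ι] (v : ι → E) (T : Matrix ι ι ℂ) :
    gram (fun j => ∑ k, T k j • v k) = Tᴴ * gram v * T := by
  ext i j
  simp only [gram, Matrix.of_apply, Matrix.mul_apply, conjTranspose_apply,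
    sum_inner, inner_sum, inner_smul_left, inner_smul_right, Finset.sum_mul, Finset.mul_sum,
    starRingEnd_apply]
  refine Finset.sum_congr rfl fun k _ => Finset.sum_congr rfl fun l _ => ?_
  ring

section Option

variable {ι : Type*} [Fintype ι] [DecidableEq ι] (v : Option ι → E)

lemma det_gram_option :
    haveI : FiniteDimensional ℂ (Submodule.span ℂ (Set.range (v ∘ some))) :=
      FiniteDimensional.span_of_finite ℂ (Set.finite_range _)
    (gram v).det = (gram (v ∘ some)).det *
      ((‖v none - (Submodule.orthogonalProjectionOnto (Submodule.span ℂ (Set.range (v ∘ some)))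
        (v none) : E)‖ : ℂ))^2 := by
  haveI : FiniteDimensional ℂ (Submodule.span ℂ (Set.range (v ∘ some))) :=
    FiniteDimensional.span_of_finite ℂ (Set.finite_range _)
  set U := Submodule.span ℂ (Set.range (v ∘ some)) with hU
  set p : E := (Submodule.orthogonalProjectionOnto U (v none) : E) with hp
  have hpU : p ∈ U := SetLike.coe_mem _
  obtain ⟨c, hc⟩ := (Submodule.mem_span_range_iff_exists_fun ℂ).mp hpU
  set w : E := v none - p with hw
  have hwmem : w ∈ Uᗮ := Submodule.sub_starProjection_mem_orthogonal (K := U) (v none)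
  have hinner : ∀ i : ι, @inner ℂ _ _ (v (some i)) w = 0 := fun i =>
    hwmem _ (Submodule.subset_span ⟨i, rfl⟩)
  -- the transvection-like matrix
  set T : Matrix (Option ι) (Option ι) ℂ := Matrix.of fun k j =>
    Option.elim j (Option.elim k 1 (fun i => -c i)) (fun jj => if k = some jj then 1 else 0)
    with hT
  set v2 : Option ι → E := fun o => Option.elim o w (fun i => v (some i)) with hv2
  have hv2T : v2 = fun j => ∑ k, T k j • v k := by
    funext j
    cases j with
    | none =>
        simp only [hv2, hT, Fintype.sum_option, Option.elim, Matrix.of_apply, one_smul, neg_smul,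
          ← Finset.sum_neg_distrib, hw]
        rw [← hc]
        simp [Function.comp, neg_one_smul]
        abel
    | some i =>
        simp [hv2, hT, Fintype.sum_option]
  have hgram2 : gram v2 = Tᴴ * gram v * T := by rw [hv2T]; exact gram_transform v T
  set e : ι ⊕ PUnit.{1} ≃ Option ι := (Equiv.optionEquivSumPUnit.{0} ι).symm with he
  have hTdet : T.det = 1 := by
    rw [← Matrix.det_submatrix_equiv_self e T]
    have hTsub : T.submatrix e e =
        Matrix.fromBlocks 1 (Matrix.of fun i (_ : PUnit.{1}) => -c i) 0 1 := by
      ext i j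
      rcases i with i | i <;> rcases j with j | j <;>
        simp [hT, he, Matrix.one_apply, Matrix.fromBlocks]
    rw [hTsub, Matrix.det_fromBlocks_zero₂₁]
    simp
  have hdet12 : (gram v2).det = (gram v).det := by
    rw [hgram2, Matrix.det_mul, Matrix.det_mul, Matrix.det_conjTranspose, hTdet]
    simp
  have hinner' : ∀ j : ι, @inner ℂ _ _ w (v (some j)) = 0 := by
    intro j
    rw [← inner_conj_symm, hinner j, map_zero]
  have hsub2 : (gram v2).submatrix e e =
      Matrix.fromBlocks (gram (v ∘ some)) 0 0
        (Matrix.of fun (_ _ : PUnit.{1}) => ((‖w‖ : ℂ))^2) := by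
    ext i j
    rcases i with i | i <;> rcases j with j | j <;>
      simp [gram, hv2, he, Matrix.fromBlocks, hinner, hinner', inner_self_eq_norm_sq_to_K]
  have hpunit : (Matrix.of fun (_ _ : PUnit.{1}) => ((‖w‖ : ℂ))^2).det = ((‖w‖ : ℂ))^2 :=
    Matrix.det_unique _
  have hdet2 : (gram v2).det = (gram (v ∘ some)).det * ((‖w‖ : ℂ))^2 := by
    rw [← Matrix.det_submatrix_equiv_self e (gram v2), hsub2, Matrix.det_fromBlocks_zero₂₁,
      hpunit]
  rw [← hdet12, hdet2]

end Option

section Finsets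

variable {Γ : Type*} [Fintype Γ] [DecidableEq Γ]

/-- Gram determinant over a finset. -/
def GD (v : Γ → E) (σ : Finset Γ) : ℂ := (gram (fun i : ↥σ => v (i : Γ))).det

/-- Distance from `v a` to the span of `v '' σ`. -/
def dd (v : Γ → E) (σ : Finset Γ) (a : Γ) : ℝ :=
  letI : FiniteDimensional ℂ (Submodule.span ℂ (v '' ↑σ)) :=
    FiniteDimensional.span_of_finite ℂ ((σ.finite_toSet).image v)
  ‖v a - (Submodule.orthogonalProjectionOnto (Submodule.span ℂ (v '' ↑σ)) (v a) : E)‖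

lemma dd_nonneg (v : Γ → E) (σ : Finset Γ) (a : Γ) : 0 ≤ dd v σ a := norm_nonneg _

lemma dd_antitone (v : Γ → E) {σ τ : Finset Γ} (h : σ ⊆ τ) (a : Γ) :
    dd v τ a ≤ dd v σ a := by
  letI : FiniteDimensional ℂ (Submodule.span ℂ (v '' ↑σ)) :=
    FiniteDimensional.span_of_finite ℂ ((σ.finite_toSet).image v)
  letI : FiniteDimensional ℂ (Submodule.span ℂ (v '' ↑τ)) :=
    FiniteDimensional.span_of_finite ℂ ((τ.finite_toSet).image v)
  have hUW : Submodule.span ℂ (v '' ↑σ) ≤ Submodule.span ℂ (v '' ↑τ) :=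
    Submodule.span_mono (Set.image_mono h)
  unfold dd
  rw [Submodule.coe_orthogonalProjectionOnto_apply (Submodule.span ℂ (v '' ↑τ)) (v a),
    Submodule.starProjection_minimal (U := Submodule.span ℂ (v '' ↑τ)) (v a)]
  refine ciInf_le ⟨0, ?_⟩ (⟨(Submodule.orthogonalProjectionOnto (Submodule.span ℂ (v '' ↑σ)) (v a) : E),
    hUW (SetLike.coe_mem _)⟩ : Submodule.span ℂ (v '' ↑τ))
  rintro x ⟨y, rfl⟩
  exact norm_nonneg _

lemma GD_insert (v : Γ → E) {σ : Finset Γ} {a : Γ} (ha : a ∉ σ) :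
    GD v (insert a σ) = GD v σ * ((dd v σ a : ℂ))^2 := by
  letI : FiniteDimensional ℂ (Submodule.span ℂ (v '' ↑σ)) :=
    FiniteDimensional.span_of_finite ℂ ((σ.finite_toSet).image v)
  set e := Finset.subtypeInsertEquivOption ha with he
  set v2 : Option ↥σ → E := fun o => o.elim (v a) (fun i => v (i : Γ)) with hv2
  have hcomp : (fun i : ↥(insert a σ) => v (i : Γ)) = v2 ∘ e := by
    funext i
    by_cases hi : (i : Γ) = a
    · simp [he, Finset.subtypeInsertEquivOption, hi, hv2]
    · simp [he, Finset.subtypeInsertEquivOption, hi, hv2]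
  have hgr : gram (fun i : ↥(insert a σ) => v (i : Γ)) = (gram v2).submatrix e e := by
    rw [hcomp]; ext i j; rfl
  have hrange : Set.range (v2 ∘ some) = v '' ↑σ := by
    have : (v2 ∘ some) = (fun i : ↥σ => v (i : Γ)) := rfl
    rw [this]
    ext x
    constructor
    · rintro ⟨i, rfl⟩; exact ⟨(i : Γ), i.2, rfl⟩
    · rintro ⟨y, hy, rfl⟩; exact ⟨⟨y, hy⟩, rfl⟩
  letI : FiniteDimensional ℂ (Submodule.span ℂ (Set.range (v2 ∘ some))) :=
    FiniteDimensional.span_of_finite ℂ (Set.finite_range _)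
  have hdgo := det_gram_option v2
  have hproj : (Submodule.orthogonalProjectionOnto (Submodule.span ℂ (Set.range (v2 ∘ some))) (v2 none) : E)
      = (Submodule.orthogonalProjectionOnto (Submodule.span ℂ (v '' ↑σ)) (v a) : E) :=
    (by
      have key : ∀ (K₁ K₂ : Submodule ℂ E) [K₁.HasOrthogonalProjection]
          [K₂.HasOrthogonalProjection], K₁ = K₂ → ∀ x : E,
          (K₁.orthogonalProjectionOnto x : E) = K₂.orthogonalProjectionOnto x := by
        intro K₁ K₂ _ _ h x; subst h; rfl
      exact key _ _ (by rw [hrange]) _)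
  have hnorm : ‖v2 none - (Submodule.orthogonalProjectionOnto (Submodule.span ℂ (Set.range (v2 ∘ some)))
      (v2 none) : E)‖ = dd v σ a := by
    unfold dd; rw [hproj]; rfl
  rw [GD, hgr, Matrix.det_submatrix_equiv_self, hdgo, hnorm]
  rfl

lemma GD_empty (v : Γ → E) : GD v ∅ = 1 := Matrix.det_isEmpty

lemma GD_real (v : Γ → E) (σ : Finset Γ) :
    GD v σ = ((GD v σ).re : ℂ) ∧ 0 ≤ (GD v σ).re := by
  induction σ using Finset.induction_on with
  | empty => simp [GD_empty]
  | @insert a s ha ih =>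
    obtain ⟨h1, h2⟩ := ih
    rw [GD_insert v ha, h1]
    have hcast : ((GD v s).re : ℂ) * ((dd v s a : ℝ) : ℂ)^2
        = (((GD v s).re * (dd v s a)^2 : ℝ) : ℂ) := by push_cast; ring
    rw [hcast, Complex.ofReal_re]
    exact ⟨rfl, mul_nonneg h2 (sq_nonneg _)⟩

lemma R_nonneg (v : Γ → E) (σ : Finset Γ) : 0 ≤ (GD v σ).re := (GD_real v σ).2

lemma R_insert (v : Γ → E) {σ : Finset Γ} {a : Γ} (ha : a ∉ σ) :
    (GD v (insert a σ)).re = (GD v σ).re * (dd v σ a)^2 := by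
  have h := GD_insert v ha
  rw [(GD_real v σ).1] at h
  have hcast : ((GD v σ).re : ℂ) * ((dd v σ a : ℝ) : ℂ)^2
      = (((GD v σ).re * (dd v σ a)^2 : ℝ) : ℂ) := by push_cast; ring
  rw [hcast] at h
  rw [h, Complex.ofReal_re]

lemma R_union_zero (v : Γ → E) (σ : Finset Γ) (h0 : (GD v σ).re = 0) (s : Finset Γ) :
    (GD v (σ ∪ s)).re = 0 := by
  induction s using Finset.induction_on with
  | empty => simpa using h0
  | @insert a s ha ih =>
    rw [Finset.union_insert]
    by_cases hmem : a ∈ σ ∪ s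
    · rwa [Finset.insert_eq_self.mpr hmem]
    · rw [R_insert v hmem, ih, zero_mul]

lemma key_prod (v : Γ → E) (α ξ η : Finset Γ) (hξη : ξ ⊆ η) (hαη : Disjoint α η) :
    (GD v (α ∪ η)).re * (GD v ξ).re ≤ (GD v (α ∪ ξ)).re * (GD v η).re := by
  induction α using Finset.induction_on with
  | empty =>
    simp only [Finset.empty_union]
    exact le_of_eq (mul_comm _ _)
  | @insert a α' ha ih =>
    have hdisj' : Disjoint α' η := (Finset.disjoint_insert_left.mp hαη).2
    have haη : a ∉ η := (Finset.disjoint_insert_left.mp hαη).1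
    have haξ : a ∉ ξ := fun h => haη (hξη h)
    have haαη : a ∉ α' ∪ η := by simp [ha, haη]
    have haαξ : a ∉ α' ∪ ξ := by simp [ha, haξ]
    rw [Finset.insert_union, Finset.insert_union, R_insert v haαη, R_insert v haαξ]
    have h1 := ih hdisj'
    have h2 : (dd v (α' ∪ η) a)^2 ≤ (dd v (α' ∪ ξ) a)^2 :=
      pow_le_pow_left₀ (dd_nonneg v _ a)
        (dd_antitone v (Finset.union_subset_union_right hξη) a) 2
    calc (GD v (α' ∪ η)).re * (dd v (α' ∪ η) a)^2 * (GD v ξ).re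
        = ((GD v (α' ∪ η)).re * (GD v ξ).re) * (dd v (α' ∪ η) a)^2 := by ring
      _ ≤ ((GD v (α' ∪ ξ)).re * (GD v η).re) * (dd v (α' ∪ ξ) a)^2 :=
          mul_le_mul h1 h2 (sq_nonneg _) (mul_nonneg (R_nonneg v _) (R_nonneg v _))
      _ = (GD v (α' ∪ ξ)).re * (dd v (α' ∪ ξ) a)^2 * (GD v η).re := by ring

end Finsets

end PapangelouAux

end


open PapangelouAux in
/-- Monotonicity of the compound Papangelou intensity: for a Hermitian positive
semidefinite matrix `A` indexed by a finite set `Γ`, with `D ξ := det A_{ξ,ξ}`,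
the map `ξ ↦ D(α∪ξ)/D(ξ)` (with the convention `x/0 = 0`) is decreasing in
`ξ ⊆ Γ\α` ordered by inclusion. -/
theorem papangelou_monotone {Γ : Type*} [Fintype Γ] [DecidableEq Γ]
    (A : Matrix Γ Γ ℂ) (hA : A.PosSemidef)
    (D : Finset Γ → ℂ)
    (hD : ∀ σ : Finset Γ,
      D σ = (A.submatrix (fun i : ↥σ => (i : Γ)) (fun j : ↥σ => (j : Γ))).det)
    (α ξ η : Finset Γ) (hξη : ξ ⊆ η) (hαη : Disjoint α η) :
    D (α ∪ η) / D η ≤ D (α ∪ ξ) / D ξ := by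
  obtain ⟨B, hB⟩ : ∃ B : Matrix Γ Γ ℂ, A = Bᴴ * B := by
    open scoped MatrixOrder in
    exact CStarAlgebra.nonneg_iff_eq_star_mul_self.mp hA.nonneg
  set v : Γ → EuclideanSpace ℂ Γ :=
    fun j => (WithLp.equiv 2 (Γ → ℂ)).symm (fun k => B k j) with hv
  have hDG : ∀ σ, D σ = GD v σ := by
    intro σ
    rw [hD, GD]
    congr 1
    ext i j
    simp only [Matrix.submatrix_apply, hB, Matrix.mul_apply, PapangelouAux.gram, Matrix.of_apply,
      PiLp.inner_apply, Matrix.conjTranspose_apply, hv, WithLp.equiv_symm_apply, PiLp.toLp_apply,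
      RCLike.inner_apply, starRingEnd_apply, mul_comm]
  have hre := fun σ => (GD_real v σ).1
  rw [hDG, hDG, hDG, hDG, hre (α ∪ η), hre η, hre (α ∪ ξ), hre ξ,
    ← Complex.ofReal_div, ← Complex.ofReal_div, Complex.real_le_real]
  have hkey := key_prod v α ξ η hξη hαη
  rcases eq_or_lt_of_le (R_nonneg v ξ) with h0 | hpos
  · have hη' : (GD v η).re = 0 := by
      have h := R_union_zero v ξ h0.symm (η \ ξ)
      rwa [Finset.union_sdiff_of_subset hξη] at h
    rw [hη', div_zero, ← h0, div_zero]
  · rcases eq_or_lt_of_le (R_nonneg v η) with h0η | hposη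
    · rw [← h0η, div_zero]
      exact div_nonneg (R_nonneg v _) (R_nonneg v ξ)
    · rw [div_le_div_iff₀ hposη hpos]
      exact hkey
end

section
/- Let x₁ < x₂ < … < x_n be real numbers, σ > 0, c > 0, and define the n×n matrix J with entries J_{ij} = c·e^{−σ|x_i − x_j|}. Then det J = u(x₁) v(x_n) ∏_{i=1}^{n−1} d(x_{i+1} − x_i), where u(x) = e^{σx}, v(x) = c·e^{−σx}, and d(s) = 2c·sinh(σ s). -/
/-!
With `a i = c e^{σ x_i}` and `b i = e^{-σ x_i}`, monotonicity of `x` gives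
`J i j = a (min i j) * b (max i j)`. For such a matrix, subtracting `b L / b P` times the
second-to-last row `P` from the last row `L` clears that row except for the corner entry
`b L (b P a L - b L a P)`, and what remains is the same kind of matrix of size one less.
Hence `det J = a 0 b L ∏ (b_i a_{i+1} - b_{i+1} a_i)`, and each factor is `2c sinh(σ(x_{i+1} - x_i))`.
-/

open Matrix

namespace Matrix

variable {R : Type*} [CommRing R]

theorem det_eq_mul_det_submatrix_castSucc {n : ℕ} (M : Matrix (Fin (n + 1)) (Fin (n + 1)) R)
    (hM : ∀ j, j ≠ Fin.last n → M (Fin.last n) j = 0) :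
    M.det = M (Fin.last n) (Fin.last n) * (M.submatrix Fin.castSucc Fin.castSucc).det := by
  rw [det_succ_row M (Fin.last n), Finset.sum_eq_single (Fin.last n)
    (fun j _ hj => by rw [hM j hj, mul_zero, zero_mul]) (by simp)]
  simp

def singlePair {ι : Type*} [LinearOrder ι] (a b : ι → R) : Matrix ι ι R :=
  of fun i j => a (min i j) * b (max i j)

theorem singlePair_submatrix {ι κ : Type*} [LinearOrder ι] [LinearOrder κ] (a b : ι → R)
    {f : κ → ι} (hf : Monotone f) :
    (singlePair a b).submatrix f f = singlePair (a ∘ f) (b ∘ f) := by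
  ext i j
  simp [singlePair, hf.map_min, hf.map_max]

theorem mul_det_singlePair_succ {n : ℕ} (a b : Fin (n + 2) → R) :
    b (Fin.last n).castSucc * (singlePair a b).det =
      b (Fin.last (n + 1)) * (b (Fin.last n).castSucc * a (Fin.last (n + 1)) -
        b (Fin.last (n + 1)) * a (Fin.last n).castSucc) *
      (singlePair (a ∘ Fin.castSucc) (b ∘ Fin.castSucc)).det := by
  set M := singlePair a b
  set L := Fin.last (n + 1)
  set P := (Fin.last n).castSucc
  have hPL : P ≤ L := Fin.le_last P
  have hLP : L ≠ P := (Fin.castSucc_lt_last _).ne'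
  set N := M.updateRow L (b P • M L + (-b L) • M P)
  have hN : b P * M.det = N.det :=
    calc b P * M.det = (M.updateRow L (b P • M L)).det := by
          rw [det_updateRow_smul, updateRow_eq_self]
      _ = N.det := by
          rw [← det_updateRow_add_smul_self _ hLP (-b L), updateRow_idem, updateRow_self,
            updateRow_ne hLP.symm]
  have hN_last_row : ∀ j, j ≠ L → N L j = 0 := by
    intro j hj
    have hjP : j ≤ P := Fin.le_castSucc_iff.mpr (Fin.lt_last_iff_ne_last.mpr hj)
    have hjL : j ≤ L := Fin.le_last j
    simp only [N, M, singlePair, updateRow_self, Pi.add_apply, Pi.smul_apply, of_apply,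
      smul_eq_mul, min_eq_right hjL, max_eq_left hjL, min_eq_right hjP, max_eq_left hjP]
    ring
  have hN_last : N L L = b L * (b P * a L - b L * a P) := by
    simp only [N, M, singlePair, updateRow_self, Pi.add_apply, Pi.smul_apply, of_apply,
      smul_eq_mul, min_self, max_self, min_eq_left hPL, max_eq_right hPL]
    ring
  have hN_sub : N.submatrix Fin.castSucc Fin.castSucc =
      singlePair (a ∘ Fin.castSucc) (b ∘ Fin.castSucc) := by
    rw [← singlePair_submatrix a b Fin.strictMono_castSucc.monotone]
    ext i j
    exact congrFun (updateRow_ne (Fin.castSucc_lt_last i).ne) _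
  rw [hN, det_eq_mul_det_submatrix_castSucc N hN_last_row, hN_last, hN_sub]

theorem det_singlePair [NoZeroDivisors R] {n : ℕ} (a b : Fin (n + 1) → R) (hb : ∀ i, b i ≠ 0) :
    (singlePair a b).det = a 0 * b (Fin.last n) *
      ∏ i : Fin n, (b i.castSucc * a i.succ - b i.succ * a i.castSucc) := by
  induction n with
  | zero => simp [singlePair, det_unique]
  | succ n ih =>
    refine mul_left_cancel₀ (hb (Fin.last n).castSucc) ?_
    rw [mul_det_singlePair_succ, ih (a ∘ Fin.castSucc) (b ∘ Fin.castSucc) fun i => hb _,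
      Fin.prod_univ_castSucc]
    simp only [Function.comp_apply, Fin.castSucc_zero, Fin.castSucc_succ, Fin.succ_last]
    ring

end Matrix

open Real in
theorem exp_kernel_det_general (n : ℕ) (x : Fin (n + 1) → ℝ) (hx : StrictMono x)
    (σ c : ℝ) :
    (Matrix.of fun i j : Fin (n + 1) => c * Real.exp (-σ * |x i - x j|)).det =
      Real.exp (σ * x 0) * (c * Real.exp (-σ * x (Fin.last n))) *
        ∏ i : Fin n, 2 * c * Real.sinh (σ * (x i.succ - x i.castSucc)) := by
  have hJ : (of fun i j => c * exp (-σ * |x i - x j|)) =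
      singlePair (fun i => c * exp (σ * x i)) (fun i => exp (-σ * x i)) := by
    ext i j
    rw [of_apply, singlePair, of_apply, hx.monotone.map_min, hx.monotone.map_max,
      ← max_sub_min_eq_abs', mul_assoc, ← exp_add]
    ring_nf
  have hfactor : ∀ s t : ℝ,
      exp (-σ * s) * (c * exp (σ * t)) - exp (-σ * t) * (c * exp (σ * s)) =
        2 * c * sinh (σ * (t - s)) := by
    intro s t
    rw [sinh_eq, show σ * (t - s) = -σ * s + σ * t by ring,
      show -(-σ * s + σ * t) = -σ * t + σ * s by ring, exp_add, exp_add]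
    ring
  rw [hJ, det_singlePair _ _ fun i => (exp_pos _).ne']
  simp only [hfactor]
  ring

/-- Determinant of the exponential kernel matrix: for `x₁ < ⋯ < x_{n+1}`, `σ, c > 0`,
the matrix `J_{ij} = c e^{-σ|x_i - x_j|}` has
`det J = u(x₁) v(x_{n+1}) ∏_i d(x_{i+1} - x_i)` with `u(x) = e^{σx}`,
`v(x) = c e^{-σx}`, `d(s) = 2c sinh(σs)`. -/
theorem exp_kernel_det (n : ℕ) (x : Fin (n + 1) → ℝ) (hx : StrictMono x)
    (σ c : ℝ) (hσ : 0 < σ) (hc : 0 < c) :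
    (Matrix.of fun i j : Fin (n + 1) => c * Real.exp (-σ * |x i - x j|)).det =
      Real.exp (σ * x 0) * (c * Real.exp (-σ * x (Fin.last n))) *
        ∏ i : Fin n, 2 * c * Real.sinh (σ * (x i.succ - x i.castSucc)) :=
  exp_kernel_det_general n x hx σ c
end

section
/- Let u, v : ℝ → ℝ be functions with v(x) > 0 for all x and u/v strictly increasing. For x₁ < ⋯ < x_n define the n×n matrix A with A_{ij} = u(x_i ∧ x_j) v(x_i ∨ x_j). Then det A = u(x₁) v(x_n) ∏_{i=1}^{n−1} [u(x_{i+1})v(x_i) − u(x_i)v(x_{i+1})]. -/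
open Matrix

theorem minmax_det_aux (f g : ℕ → ℝ) (hg : ∀ m, g m ≠ 0) :
    ∀ n : ℕ, (Matrix.of fun i j : Fin (n + 1) =>
        f (min i.val j.val) * g (max i.val j.val)).det =
      f 0 * g n * ∏ i : Fin n, (f (i + 1) * g i - f i * g (i + 1)) := by
  intro n
  induction n with
  | zero => simp [Matrix.det_fin_one]
  | succ n ih =>
    set A : Matrix (Fin (n + 2)) (Fin (n + 2)) ℝ :=
      Matrix.of fun i j : Fin (n + 2) => f (min i.val j.val) * g (max i.val j.val) with hA
    set c : ℝ := g (n + 1) / g n with hc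
    have hne : (Fin.last (n + 1)) ≠ (Fin.last n).castSucc := by
      simp [Fin.ext_iff]
    have hdet : A.det =
        (A.updateRow (Fin.last (n + 1))
          (A (Fin.last (n + 1)) + (-c) • A ((Fin.last n).castSucc))).det := by
      rw [Matrix.det_updateRow_add_smul_self A hne]
    rw [hdet]
    set B := A.updateRow (Fin.last (n + 1))
        (A (Fin.last (n + 1)) + (-c) • A ((Fin.last n).castSucc)) with hB
    have hrow : ∀ j : Fin (n + 2), B (Fin.last (n + 1)) j =
        if j = Fin.last (n + 1) then f (n + 1) * g (n + 1) - c * (f n * g (n + 1)) else 0 := by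
      intro j
      rw [hB, Matrix.updateRow_self]
      by_cases hj : j = Fin.last (n + 1)
      · subst hj
        simp only [hA, Pi.add_apply, Pi.smul_apply, Matrix.of_apply, if_pos rfl, smul_eq_mul]
        have h1 : min (Fin.last (n + 1)).val (Fin.last (n + 1)).val = n + 1 := by simp [Fin.last]
        have h2 : max (Fin.last (n + 1)).val (Fin.last (n + 1)).val = n + 1 := by simp [Fin.last]
        have h3 : min ((Fin.last n).castSucc).val (Fin.last (n + 1)).val = n := by
          simp [Fin.last]
        have h4 : max ((Fin.last n).castSucc).val (Fin.last (n + 1)).val = n + 1 := by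
          simp [Fin.last]
        rw [h1, h2, h3, h4, hc]
        simp only [if_pos rfl, eq_self_iff_true, if_true]
        field_simp
        ring
      · have hjn : j.val ≤ n := by
          have h := j.isLt
          have : j.val ≠ n + 1 := fun h' => hj (Fin.ext h')
          omega
        simp only [hA, Pi.add_apply, Pi.smul_apply, Matrix.of_apply, if_neg hj, smul_eq_mul]
        have h1 : min (Fin.last (n + 1)).val j.val = j.val := by simp [Fin.last]; omega
        have h2 : max (Fin.last (n + 1)).val j.val = n + 1 := by simp [Fin.last]; omega
        have h3 : min ((Fin.last n).castSucc).val j.val = j.val := by simp [Fin.last]; omega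
        have h4 : max ((Fin.last n).castSucc).val j.val = n := by simp [Fin.last]; omega
        rw [h1, h2, h3, h4, hc]
        have h5 : g (n + 1) / g n * (f ↑j * g n) = f ↑j * g (n + 1) := by
          field_simp
          rw [mul_assoc, mul_left_comm, mul_div_cancel_left₀ _ (hg n)]
        rw [neg_mul, h5, add_neg_cancel]
    rw [Matrix.det_succ_row B (Fin.last (n + 1))]
    rw [Finset.sum_eq_single (Fin.last (n + 1))]
    · have hsub : (B.submatrix (Fin.last (n + 1)).succAbove (Fin.last (n + 1)).succAbove) =
          Matrix.of fun i j : Fin (n + 1) => f (min i.val j.val) * g (max i.val j.val) := by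
        ext i j
        simp only [Matrix.submatrix_apply, Fin.succAbove_last]
        rw [hB, Matrix.updateRow_ne (by exact (Fin.castSucc_lt_last i).ne)]
        simp [hA]
      rw [hsub, ih, hrow, if_pos rfl]
      rw [Fin.prod_univ_castSucc (n := n)]
      simp only [Fin.val_last, Fin.coe_castSucc]
      have hpow : ((-1 : ℝ)) ^ (n + 1 + (n + 1)) = 1 :=
        Even.neg_one_pow ⟨n + 1, by ring⟩
      rw [hpow, hc]
      have hgn := hg n
      field_simp
    · intro j _ hj
      rw [hrow, if_neg hj]
      ring
    · intro h
      exact absurd (Finset.mem_univ _) h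

/-- Determinant of a one-dimensional "Markov" kernel matrix: for `x₁ < ⋯ < x_{n+1}`,
`v > 0` and `u/v` strictly increasing, the matrix `A_{ij} = u(x_i ∧ x_j) v(x_i ∨ x_j)`
has `det A = u(x₁) v(x_{n+1}) ∏_i (u(x_{i+1})v(x_i) - u(x_i)v(x_{i+1}))`. -/
theorem markov_kernel_det (n : ℕ) (x : Fin (n + 1) → ℝ) (hx : StrictMono x)
    (u v : ℝ → ℝ) (hv : ∀ y, 0 < v y) (huv : StrictMono fun y => u y / v y) :
    (Matrix.of fun i j : Fin (n + 1) =>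
        u (min (x i) (x j)) * v (max (x i) (x j))).det =
      u (x 0) * v (x (Fin.last n)) *
        ∏ i : Fin n,
          (u (x i.succ) * v (x i.castSucc) - u (x i.castSucc) * v (x i.succ)) := by
  have hx' := hx.monotone
  set f : ℕ → ℝ := fun m => u (x ⟨min m n, Nat.lt_succ_of_le (min_le_right m n)⟩) with hf
  set g : ℕ → ℝ := fun m => v (x ⟨min m n, Nat.lt_succ_of_le (min_le_right m n)⟩) with hgd
  have key : ∀ m : ℕ, ∀ h : m ≤ n, (⟨min m n, Nat.lt_succ_of_le (min_le_right m n)⟩ : Fin (n + 1)) = ⟨m, Nat.lt_succ_of_le h⟩ := by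
    intro m h
    exact Fin.ext (by simp [Nat.min_eq_left h])
  have hfi : ∀ i : Fin (n + 1), f i.val = u (x i) := by
    intro i
    simp only [hf]
    rw [key i.val (Nat.lt_succ_iff.mp i.isLt)]
  have hgi : ∀ i : Fin (n + 1), g i.val = v (x i) := by
    intro i
    simp only [hgd]
    rw [key i.val (Nat.lt_succ_iff.mp i.isLt)]
  have hmat : (Matrix.of fun i j : Fin (n + 1) =>
      u (min (x i) (x j)) * v (max (x i) (x j))) =
      Matrix.of fun i j : Fin (n + 1) => f (min i.val j.val) * g (max i.val j.val) := by
    ext i j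
    have h1 : min (x i) (x j) = x (min i j) := (hx'.map_min).symm
    have h2 : max (x i) (x j) = x (max i j) := (hx'.map_max).symm
    have h3 : min i.val j.val = (min i j).val := rfl
    have h4 : max i.val j.val = (max i j).val := rfl
    simp only [Matrix.of_apply, h1, h2, h3, h4, hfi, hgi]
  rw [hmat, minmax_det_aux f g (fun m => (hv _).ne')]
  have hf0 : f 0 = u (x 0) := hfi 0
  have hgn : g n = v (x (Fin.last n)) := hgi (Fin.last n)
  rw [hf0, hgn]
  congr 1
  apply Finset.prod_congr rfl
  intro i _
  have h5 : f (i.val + 1) = u (x i.succ) := hfi i.succ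
  have h6 : g (i.val + 1) = v (x i.succ) := hgi i.succ
  have h7 : f i.val = u (x i.castSucc) := hfi i.castSucc
  have h8 : g i.val = v (x i.castSucc) := hgi i.castSucc
  rw [h5, h6, h7, h8]
end

section
/- Let Γ be a finite set and A a Hermitian positive semidefinite matrix indexed by Γ with det A_{β,β} > 0 for some β ⊆ Γ, α := Γ\β. Define B indexed by α by B_{kl} := det A_{β∪{k}, β∪{l}} / det A_{β,β}. Then B is Hermitian positive semidefinite. -/
open Matrix
open scoped ComplexOrder

lemma psd_posDef_of_det_ne_zero {n : Type*} [Fintype n] [DecidableEq n]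
    {M : Matrix n n ℂ} (hM : M.PosSemidef) (h : M.det ≠ 0) : M.PosDef := by
  refine posDef_iff_dotProduct_mulVec.mpr ⟨hM.1, fun x hx => ?_⟩
  have h2 := hM.dotProduct_mulVec_nonneg x
  rcases h2.lt_or_eq with h3 | h3
  · exact h3
  · exfalso
    have h4 : M *ᵥ x = 0 := (hM.dotProduct_mulVec_zero_iff x).mp h3.symm
    have : x = 0 := by
      have hi : IsUnit M.det := isUnit_iff_ne_zero.mpr h
      have := M.invertibleOfIsUnitDet hi
      have := congrArg (fun v => M⁻¹ *ᵥ v) h4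
      simpa [mulVec_mulVec, nonsing_inv_mul M hi] using this
    exact hx this

/-- If `A` is Hermitian positive semidefinite indexed by a finite set `Γ`, `β ⊆ Γ` with
`det A_{β,β} > 0` and `α := Γ\β`, then the matrix `B` indexed by `α` with entries
`B_{kl} = det A_{β∪{k},β∪{l}} / det A_{β,β}` is Hermitian positive semidefinite. -/
theorem quotient_matrix_posSemidef {Γ : Type*} [Fintype Γ] [DecidableEq Γ]
    (A : Matrix Γ Γ ℂ) (hA : A.PosSemidef)
    (β : Finset Γ)
    (hdet : 0 < (A.submatrix (fun i : ↥β => (i : Γ)) (fun j : ↥β => (j : Γ))).det) :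
    Matrix.PosSemidef (Matrix.of fun k l : ↥βᶜ =>
      (A.submatrix (fun o : Option ↥β => o.elim (k : Γ) (fun i => (i : Γ)))
                   (fun o : Option ↥β => o.elim (l : Γ) (fun j => (j : Γ)))).det /
      (A.submatrix (fun i : ↥β => (i : Γ)) (fun j : ↥β => (j : Γ))).det) := by
  classical
  set D : Matrix ↥β ↥β ℂ := A.submatrix (fun i : ↥β => (i : Γ)) (fun j : ↥β => (j : Γ)) with hD_def
  have hDdet : D.det ≠ 0 := ne_of_gt hdet
  have hDpsd : D.PosSemidef := hA.submatrix _
  have hDpd : D.PosDef := psd_posDef_of_det_ne_zero hDpsd hDdet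
  haveI : Invertible D := D.invertibleOfIsUnitDet (isUnit_iff_ne_zero.mpr hDdet)
  set Aαα : Matrix ↥βᶜ ↥βᶜ ℂ := A.submatrix (fun i => (i : Γ)) (fun j => (j : Γ)) with hAαα
  set Aαβ : Matrix ↥βᶜ ↥β ℂ := A.submatrix (fun i => (i : Γ)) (fun j => (j : Γ)) with hAαβ
  have hMeq : (A.submatrix (Sum.elim (fun i : ↥βᶜ => (i : Γ)) (fun i : ↥β => (i : Γ)))
      (Sum.elim (fun i : ↥βᶜ => (i : Γ)) (fun i : ↥β => (i : Γ))))
      = fromBlocks Aαα Aαβ Aαβᴴ D := by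
    ext i j
    cases i <;> cases j <;>
      simp [fromBlocks, Aαα, Aαβ, D, conjTranspose_apply, hA.1.apply]
  have hMpsd : (fromBlocks Aαα Aαβ Aαβᴴ D).PosSemidef := hMeq ▸ hA.submatrix _
  have hSchur : (Aαα - Aαβ * D⁻¹ * Aαβᴴ).PosSemidef :=
    (PosDef.fromBlocks₂₂ Aαα Aαβ hDpd).mp hMpsd
  convert hSchur using 1
  ext k l
  -- compute the bordered determinant
  have key : (A.submatrix (fun o : Option ↥β => o.elim (k : Γ) (fun i => (i : Γ)))
                   (fun o : Option ↥β => o.elim (l : Γ) (fun j => (j : Γ)))).det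
      = D.det * (Aαα k l - (Aαβ * D⁻¹ * Aαβᴴ) k l) := by
    set N := A.submatrix (fun o : Option ↥β => o.elim (k : Γ) (fun i => (i : Γ)))
                   (fun o : Option ↥β => o.elim (l : Γ) (fun j => (j : Γ))) with hN
    let e : Option ↥β ≃ ↥β ⊕ Unit := Equiv.optionEquivSumPUnit ↥β
    have hre : N.det = (N.submatrix e.symm
        e.symm).det :=
      (det_submatrix_equiv_self _ _).symm
    have hblocks : N.submatrix e.symm
        e.symm
        = fromBlocks D (Matrix.of fun (i : ↥β) (_ : Unit) => A i l)
            (Matrix.of fun (_ : Unit) (j : ↥β) => A k j)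
            (Matrix.of fun (_ : Unit) (_ : Unit) => A k l) := by
      ext i j
      cases i <;> cases j <;>
        simp [e, N, fromBlocks, D, Equiv.optionEquivSumPUnit]
    rw [hre, hblocks, det_fromBlocks₁₁]
    congr 1
    rw [det_unique]
    simp only [Matrix.sub_apply, of_apply, mul_apply, invOf_eq_nonsing_inv]
    congr 1
    refine Finset.sum_congr rfl fun x _ => ?_
    congr 1
    simp [Aαβ, conjTranspose_apply, hA.1.apply]
  simp only [of_apply, key]
  field_simp
  exact (Matrix.sub_apply _ _ _ _).symm
end
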